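/- arXiv:1705.04819 — 8 statements merged into one kernel-verified Lean document; each statement's English description precedes it below -/
import Mathlib

section
/- Let N ≥ 2 and let P(t) = t^N + Σ_j α_j t^j be a complex polynomial in which every exponent occurring (including N) has the same parity (only odd powers, or only even powers). Let p, k, k' ∈ ℂ and let w_1, …, w_N ∈ ℂ be such that ∏_{γ=1}^N (t − w_γ) = P(t) − P(−p) for every t ∈ ℂ. If P(k) = P(−k'), P(−k) ≠ P(−p) and P(−k') ≠ P(−p), then ∏_{γ=1}^N [(k − w_γ)(k' − w_γ)] / [(−k − w_γ)(−k' − w_γ)] = 1. -/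
/-- For `P` an odd-or-even polynomial of degree `N`, with the `w γ` the roots of
`P(t) - P(-p)`, on the curve `P(k) = P(-k')` and away from the singular set, the product
`∏ γ, ((k - w γ)(k' - w γ))/((-k - w γ)(-k' - w γ))` equals `1`. -/
theorem bkp_ckp_reduction_plane_wave_invariance
    (N : ℕ) (hN : 2 ≤ N) (α : ℕ → ℂ)
    (P : ℂ → ℂ) (hP : ∀ t : ℂ, P t = t ^ N + ∑ j ∈ Finset.range N, α j * t ^ j)
    (hpar : ∀ j ∈ Finset.range N, α j ≠ 0 → j % 2 = N % 2)
    (p k k' : ℂ) (w : Fin N → ℂ)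
    (hw : ∀ t : ℂ, ∏ γ : Fin N, (t - w γ) = P t - P (-p))
    (hcurve : P k = P (-k'))
    (hne1 : P (-k) ≠ P (-p)) (hne2 : P (-k') ≠ P (-p)) :
    ∏ γ : Fin N, ((k - w γ) * (k' - w γ)) / ((-k - w γ) * (-k' - w γ)) = 1 := by
  -- parity of P
  have hpari : ∀ t : ℂ, P (-t) = (-1 : ℂ) ^ N * P t := by
    intro t
    rw [hP, hP, mul_add, neg_pow]
    congr 1
    rw [Finset.mul_sum]
    refine Finset.sum_congr rfl fun j hj => ?_
    by_cases h0 : α j = 0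
    · simp [h0]
    · have hpj := hpar j hj h0
      have : (-1 : ℂ) ^ j = (-1 : ℂ) ^ N := by
        rw [← Nat.div_add_mod j 2, ← Nat.div_add_mod N 2, hpj]
        simp [pow_add, pow_mul]
      rw [neg_pow, this]
      ring
  have hsq : ((-1 : ℂ) ^ N) * ((-1 : ℂ) ^ N) = 1 := by
    rw [← pow_add, ← two_mul, pow_mul]
    norm_num
  have hk' : P k' = (-1 : ℂ) ^ N * P k := by
    have := hpari k'
    rw [← hcurve] at this
    calc P k' = 1 * P k' := (one_mul _).symm
    _ = (-1:ℂ)^N * ((-1:ℂ)^N * P k') := by rw [← mul_assoc, hsq]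
    _ = (-1:ℂ)^N * P k := by rw [← this]
  have hprod : ∏ γ : Fin N, ((k - w γ) * (k' - w γ)) / ((-k - w γ) * (-k' - w γ))
      = ((P k - P (-p)) * (P k' - P (-p))) / ((P (-k) - P (-p)) * (P (-k') - P (-p))) := by
    rw [Finset.prod_div_distrib, Finset.prod_mul_distrib, Finset.prod_mul_distrib,
      hw k, hw k', hw (-k), hw (-k')]
  rw [hprod, hpari k, hk', ← hcurve]
  have hA : P k - P (-p) ≠ 0 := by
    rw [hcurve]; exact sub_ne_zero_of_ne hne2
  have hB : (-1 : ℂ) ^ N * P k - P (-p) ≠ 0 := by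
    rw [← hpari k]; exact sub_ne_zero_of_ne hne1
  rw [mul_comm (P k - P (-p))]
  exact div_self (mul_ne_zero hB hA)
end

section
/- Let N ≥ 1, w : Fin N → ℂ, and let N_s ≥ 1, a : Fin N_s → ℂ, and k, k' : Fin N_s → ℂ satisfy: k_i − w_γ ≠ 0 and k'_j + w_γ ≠ 0 for all indices, k_i + k'_j ≠ 0 for all i, j, and the on-curve condition ∏_{γ=1}^N (k_j − w_γ) = ∏_{γ=1}^N (−k'_j − w_γ) for every j. For n : Fin N → ℤ define the N_s × N_s matrix M(n) by M(n)_{j,i} = [∏_{γ=1}^N (k_i − w_γ)^{n_γ} (−k'_j − w_γ)^{−n_γ}] / (k_i + k'_j), and set τ(n) = det(I + diag(a)·M(n)). Then τ(n + (1,1,…,1)) = τ(n) for every n, i.e. τ is invariant under the simultaneous unit shift in all N lattice directions. -/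
/-- The soliton τ-function of the reduced discrete AKP hierarchy is invariant
under the simultaneous unit shift in all `N` lattice directions (the symmetry constraint
induced by the on-curve condition on the spectral data). -/
theorem reduced_akp_tau_shift_invariance
    (N Ns : ℕ) (hN : 1 ≤ N) (hNs : 1 ≤ Ns)
    (w : Fin N → ℂ) (a k k' : Fin Ns → ℂ)
    (hk : ∀ (i : Fin Ns) (γ : Fin N), k i - w γ ≠ 0)
    (hk' : ∀ (j : Fin Ns) (γ : Fin N), k' j + w γ ≠ 0)
    (hkk' : ∀ i j : Fin Ns, k i + k' j ≠ 0)
    (hcurve : ∀ j : Fin Ns, ∏ γ : Fin N, (k j - w γ) = ∏ γ : Fin N, (-k' j - w γ))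
    (M : (Fin N → ℤ) → Matrix (Fin Ns) (Fin Ns) ℂ)
    (hM : ∀ (n : Fin N → ℤ) (j i : Fin Ns), M n j i =
      (∏ γ : Fin N, (k i - w γ) ^ (n γ) * (-k' j - w γ) ^ (-(n γ))) / (k i + k' j))
    (τ : (Fin N → ℤ) → ℂ)
    (hτ : ∀ n : Fin N → ℤ, τ n = Matrix.det (1 + Matrix.diagonal a * M n)) :
    ∀ n : Fin N → ℤ, τ (fun γ => n γ + 1) = τ n := by
  intro n
  set d : Fin Ns → ℂ := fun j => ∏ γ : Fin N, (k j - w γ) with hd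
  have hd0 : ∀ j, d j ≠ 0 := fun j => Finset.prod_ne_zero_iff.2 fun γ _ => hk j γ
  have hkw' : ∀ (j : Fin Ns) (γ : Fin N), (-k' j - w γ) ≠ 0 := by
    intro j γ h
    apply hk' j γ
    linear_combination -h
  set D : Matrix (Fin Ns) (Fin Ns) ℂ := Matrix.diagonal d with hD
  set Dinv : Matrix (Fin Ns) (Fin Ns) ℂ := Matrix.diagonal (fun j => (d j)⁻¹) with hDinv
  have hDD : Dinv * D = 1 := by
    rw [hDinv, hD, Matrix.diagonal_mul_diagonal]
    convert Matrix.diagonal_one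
    exact inv_mul_cancel₀ (hd0 _)
  have hMid : M (fun γ => n γ + 1) = Dinv * M n * D := by
    ext j i
    rw [hD, hDinv, Matrix.mul_diagonal, Matrix.diagonal_mul, hM, hM]
    have key : (∏ γ : Fin N, (k i - w γ) ^ (n γ + 1) * (-k' j - w γ) ^ (-(n γ + 1)))
        = (d j)⁻¹ * (∏ γ : Fin N, (k i - w γ) ^ (n γ) * (-k' j - w γ) ^ (-(n γ))) * d i := by
      have step : ∀ γ ∈ Finset.univ, (k i - w γ) ^ (n γ + 1) * (-k' j - w γ) ^ (-(n γ + 1))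
          = ((k i - w γ) ^ (n γ) * (-k' j - w γ) ^ (-(n γ)))
            * ((k i - w γ) * (-k' j - w γ)⁻¹) := by
        intro γ _
        rw [zpow_add_one₀ (hk i γ), show -(n γ + 1) = -(n γ) + (-1) by ring,
          zpow_add₀ (hkw' j γ), zpow_neg_one]
        ring
      rw [Finset.prod_congr rfl step, Finset.prod_mul_distrib, Finset.prod_mul_distrib,
        Finset.prod_mul_distrib, Finset.prod_inv_distrib, ← hcurve j]
      simp only [hd]
      ring
    rw [key]
    ring
  have hswap : Matrix.diagonal a * Dinv = Dinv * Matrix.diagonal a := by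
    have hfun : (fun i => a i * (d i)⁻¹) = fun i => (d i)⁻¹ * a i := by
      funext i; ring
    rw [hDinv, Matrix.diagonal_mul_diagonal, Matrix.diagonal_mul_diagonal, hfun]
  have hconj : 1 + Matrix.diagonal a * M (fun γ => n γ + 1)
      = Dinv * (1 + Matrix.diagonal a * M n) * D := by
    rw [Matrix.mul_add, Matrix.mul_one, Matrix.add_mul, hDD, hMid,
      ← Matrix.mul_assoc, ← Matrix.mul_assoc, hswap, Matrix.mul_assoc Dinv,
      Matrix.mul_assoc Dinv]
  rw [hτ, hτ, hconj, Matrix.det_mul, Matrix.det_mul]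
  have hdet : Dinv.det * D.det = 1 := by
    rw [← Matrix.det_mul, hDD, Matrix.det_one]
  calc Dinv.det * (1 + Matrix.diagonal a * M n).det * D.det
      = (Dinv.det * D.det) * (1 + Matrix.diagonal a * M n).det := by ring
    _ = (1 + Matrix.diagonal a * M n).det := by rw [hdet, one_mul]
end

section
/- Let N, N' ≥ 1, let A be an arbitrary complex N × N' matrix, let k : Fin N → ℂ, k' : Fin N' → ℂ and p, q, r ∈ ℂ be such that p + k_i, q + k_i, r + k_i, p − k'_j, q − k'_j, r − k'_j and k_i + k'_j are all nonzero. For (n,m,h) ∈ ℤ³ define the N' × N matrix M(n,m,h) with entries M_{j,i} = (p+k_i)^n (q+k_i)^m (r+k_i)^h (p−k'_j)^{−n} (q−k'_j)^{−m} (r−k'_j)^{−h} / (k_i + k'_j), and set τ(n,m,h) = det(I + A·M(n,m,h)). Then for all (n,m,h) ∈ ℤ³: (p−q) τ(n,m,h+1) τ(n+1,m+1,h) + (q−r) τ(n+1,m,h) τ(n,m+1,h+1) + (r−p) τ(n,m+1,h) τ(n+1,m,h+1) = 0. -/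
/-!
Under a lattice shift the Cauchy-type matrix `M = (σ_j ρ_i / (k_i + k'_j))` changes by a rank-one
matrix, `M(n+1,m,h) = M(n,m,h) + σ(n+1,m,h) ρ(n,m,h)ᵀ`, so a double shift is a rank-two update.
When `B = 1 + A M` is invertible, the matrix determinant lemma expresses the shifted τ's through
the pairings `y ⬝ B⁻¹ A x`, and a linear relation between the shifted `σ`'s gives the discrete Miwa
relations `(p - q) τ(n+1,m+1,h) = ω_p τ(n,m+1,h) - ω_q τ(n+1,m,h)` with
`ω_s = s - (k ρ) ⬝ B⁻¹ A σ_s`. The cyclic sum of the three Miwa relations is the Hirota–Miwa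
equation. Invertibility is removed by replacing `A` with `t A`: the Hirota–Miwa expression is then
a polynomial in `t` vanishing wherever the polynomial `det (1 + t A M)`, which is `1` at `t = 0`,
does not.
-/

open Matrix Polynomial

namespace Matrix

variable {R : Type*} [CommRing R] {n : Type*} [Fintype n] [DecidableEq n]

theorem det_add_vecMulVec {B : Matrix n n R} (hB : IsUnit B.det) (u v : n → R) :
    (B + vecMulVec u v).det = B.det * (1 + v ⬝ᵥ (B⁻¹ *ᵥ u)) := by
  rw [vecMulVec_eq Unit, det_add_replicateCol_mul_replicateRow hB, Matrix.mul_assoc,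
    ← replicateCol_mulVec, det_unique (n := Unit)]
  simp

theorem det_add_vecMulVec_add_vecMulVec {B : Matrix n n R} (hB : IsUnit B.det)
    (u₁ v₁ u₂ v₂ : n → R) :
    (B + vecMulVec u₁ v₁ + vecMulVec u₂ v₂).det =
      B.det * ((1 + v₁ ⬝ᵥ (B⁻¹ *ᵥ u₁)) * (1 + v₂ ⬝ᵥ (B⁻¹ *ᵥ u₂)) -
        (v₁ ⬝ᵥ (B⁻¹ *ᵥ u₂)) * (v₂ ⬝ᵥ (B⁻¹ *ᵥ u₁))) := by
  have hUV : vecMulVec u₁ v₁ + vecMulVec u₂ v₂ = (of ![u₁, u₂])ᵀ * of ![v₁, v₂] := by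
    ext i j
    simp [mul_apply, Fin.sum_univ_two, vecMulVec_apply]
  have hVU : of ![v₁, v₂] * B⁻¹ * (of ![u₁, u₂])ᵀ =
      of fun a b => ![v₁, v₂] a ⬝ᵥ (B⁻¹ *ᵥ ![u₁, u₂] b) := by
    ext a b
    rw [Matrix.mul_assoc, mul_apply]
    simp [mul_apply, mulVec, dotProduct]
  rw [add_assoc, hUV, det_add_mul _ _ hB, hVU, det_fin_two]
  simp

theorem miwa_det_add_vecMulVec_add_vecMulVec {B : Matrix n n R} (hB : IsUnit B.det)
    (c d : n → R) {p q : R} {up uq upq : n → R} (hu : up - uq = (q - p) • upq) :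
    (p - q) * (B + vecMulVec up c + vecMulVec upq (p • c + d)).det =
      (p - d ⬝ᵥ (B⁻¹ *ᵥ up)) * (B + vecMulVec uq c).det -
        (q - d ⬝ᵥ (B⁻¹ *ᵥ uq)) * (B + vecMulVec up c).det := by
  have hup : ∀ y : n → R, y ⬝ᵥ (B⁻¹ *ᵥ up) =
      y ⬝ᵥ (B⁻¹ *ᵥ uq) + (q - p) * y ⬝ᵥ (B⁻¹ *ᵥ upq) := by
    intro y
    rw [eq_add_of_sub_eq hu, mulVec_add, mulVec_smul, dotProduct_add, dotProduct_smul,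
      smul_eq_mul, add_comm]
  rw [det_add_vecMulVec_add_vecMulVec hB, det_add_vecMulVec hB, det_add_vecMulVec hB]
  simp only [add_dotProduct, smul_dotProduct, smul_eq_mul, hup]
  ring

theorem eval_det_one_add_X_smul (M : Matrix n n R) (t : R) :
    (det (1 + (X : R[X]) • M.map C)).eval t = det (1 + t • M) := by
  simp [eval_det, ← smul_eq_mul_diagonal]

end Matrix

theorem Polynomial.eq_zero_of_eval_eq_zero_of_eval_ne_zero {R : Type*} [CommRing R] [IsDomain R]
    [Infinite R] {P D : R[X]} (hD : D ≠ 0) (h : ∀ t, D.eval t ≠ 0 → P.eval t = 0) : P = 0 := by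
  have hDP : D * P = 0 := Polynomial.funext fun t => by
    by_cases ht : D.eval t = 0 <;> simp [ht, h]
  exact (mul_eq_zero.1 hDP).resolve_left hD

section Cauchy

variable {K : Type*} [Field K] {ι ι' : Type*}

def cauchyMatrix (k : ι → K) (k' : ι' → K) (ρ : ι → K) (σ : ι' → K) : Matrix ι' ι K :=
  of fun j i => σ j * ρ i / (k i + k' j)

theorem cauchyMatrix_shift {k : ι → K} {k' : ι' → K} (hk : ∀ i j, k i + k' j ≠ 0) {s : K}
    {ρ ρ' : ι → K} {σ σ' : ι' → K} (hρ : ∀ i, ρ' i = (s + k i) * ρ i)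
    (hσ : ∀ j, (s - k' j) * σ' j = σ j) :
    cauchyMatrix k k' ρ' σ' = cauchyMatrix k k' ρ σ + vecMulVec σ' ρ := by
  ext j i
  simp only [cauchyMatrix, of_apply, Matrix.add_apply, vecMulVec_apply, hρ, ← hσ]
  field_simp [hk i j]
  ring

variable [Fintype ι'] [DecidableEq ι]

theorem one_add_mul_cauchyMatrix_shift (A : Matrix ι ι' K) {k : ι → K} {k' : ι' → K}
    (hk : ∀ i j, k i + k' j ≠ 0) {s : K} {ρ ρ' : ι → K} {σ σ' : ι' → K}
    (hρ : ∀ i, ρ' i = (s + k i) * ρ i) (hσ : ∀ j, (s - k' j) * σ' j = σ j) :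
    1 + A * cauchyMatrix k k' ρ' σ' = 1 + A * cauchyMatrix k k' ρ σ + vecMulVec (A *ᵥ σ') ρ := by
  rw [cauchyMatrix_shift hk hρ hσ, Matrix.mul_add, mul_vecMulVec, add_assoc]

theorem miwa_det_one_add_mul_cauchyMatrix [Fintype ι] (A : Matrix ι ι' K) {k : ι → K} {k' : ι' → K}
    (hk : ∀ i j, k i + k' j ≠ 0) {s t : K} {ρ ρs ρt ρst : ι → K} {σ σs σt σst : ι' → K}
    (hB : IsUnit (1 + A * cauchyMatrix k k' ρ σ).det)
    (hρs : ∀ i, ρs i = (s + k i) * ρ i) (hρt : ∀ i, ρt i = (t + k i) * ρ i)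
    (hρst : ∀ i, ρst i = (t + k i) * ρs i)
    (hσs : ∀ j, (s - k' j) * σs j = σ j) (hσt : ∀ j, (t - k' j) * σt j = σ j)
    (hσst : ∀ j, (t - k' j) * σst j = σs j) (hσts : ∀ j, (s - k' j) * σst j = σt j) :
    (s - t) * (1 + A * cauchyMatrix k k' ρst σst).det =
      (s - (k * ρ) ⬝ᵥ ((1 + A * cauchyMatrix k k' ρ σ)⁻¹ *ᵥ (A *ᵥ σs))) *
          (1 + A * cauchyMatrix k k' ρt σt).det -
        (t - (k * ρ) ⬝ᵥ ((1 + A * cauchyMatrix k k' ρ σ)⁻¹ *ᵥ (A *ᵥ σt))) *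
          (1 + A * cauchyMatrix k k' ρs σs).det := by
  have hρs' : ρs = s • ρ + k * ρ := funext fun i => by simp [hρs, add_mul]
  have hσ : A *ᵥ σs - A *ᵥ σt = (t - s) • (A *ᵥ σst) := by
    rw [← mulVec_sub, ← mulVec_smul]
    congr 1
    funext j
    simp only [Pi.sub_apply, Pi.smul_apply, smul_eq_mul, ← hσst j, ← hσts j]
    ring
  rw [one_add_mul_cauchyMatrix_shift A hk hρst hσst, one_add_mul_cauchyMatrix_shift A hk hρs hσs,
    one_add_mul_cauchyMatrix_shift A hk hρt hσt, hρs']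
  exact miwa_det_add_vecMulVec_add_vecMulVec hB ρ (k * ρ) hσ

end Cauchy

section HirotaMiwa

variable {R : Type*} [CommRing R]

def hirotaMiwa (p q r : R) (τ : ℤ → ℤ → ℤ → R) (n m h : ℤ) : R :=
  (p - q) * τ n m (h + 1) * τ (n + 1) (m + 1) h +
    (q - r) * τ (n + 1) m h * τ n (m + 1) (h + 1) +
    (r - p) * τ n (m + 1) h * τ (n + 1) m (h + 1)

theorem map_hirotaMiwa {S : Type*} [CommRing S] (f : R →+* S) (p q r : R) (τ : ℤ → ℤ → ℤ → R)
    (n m h : ℤ) :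
    f (hirotaMiwa p q r τ n m h) =
      hirotaMiwa (f p) (f q) (f r) (fun a b c => f (τ a b c)) n m h := by
  simp only [hirotaMiwa, map_add, map_mul, map_sub]

theorem hirotaMiwa_eq_zero_of_miwa {p q r ωp ωq ωr : R} {τ : ℤ → ℤ → ℤ → R} {n m h : ℤ}
    (hpq : (p - q) * τ (n + 1) (m + 1) h = ωp * τ n (m + 1) h - ωq * τ (n + 1) m h)
    (hqr : (q - r) * τ n (m + 1) (h + 1) = ωq * τ n m (h + 1) - ωr * τ n (m + 1) h)
    (hrp : (r - p) * τ (n + 1) m (h + 1) = ωr * τ (n + 1) m h - ωp * τ n m (h + 1)) :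
    hirotaMiwa p q r τ n m h = 0 := by
  unfold hirotaMiwa
  linear_combination τ n m (h + 1) * hpq + τ (n + 1) m h * hqr + τ n (m + 1) h * hrp

theorem hirotaMiwa_det_one_add_of_forall_isUnit {K : Type*} [Field K] [Infinite K] {ι : Type*}
    [Fintype ι] [DecidableEq ι] (p q r : K) (L : ℤ → ℤ → ℤ → Matrix ι ι K) (n m h : ℤ)
    (H : ∀ t : K, IsUnit (1 + t • L n m h).det →
      hirotaMiwa p q r (fun a b c => (1 + t • L a b c).det) n m h = 0) :
    hirotaMiwa p q r (fun a b c => (1 + L a b c).det) n m h = 0 := by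
  set D : ℤ → ℤ → ℤ → K[X] := fun a b c => (1 + (X : K[X]) • (L a b c).map C).det
  have hD : ∀ t a b c, (D a b c).eval t = (1 + t • L a b c).det :=
    fun t a b c => eval_det_one_add_X_smul _ t
  have hP : ∀ t, (hirotaMiwa (C p) (C q) (C r) D n m h).eval t =
      hirotaMiwa p q r (fun a b c => (1 + t • L a b c).det) n m h := by
    intro t
    rw [← coe_evalRingHom, map_hirotaMiwa]
    simp only [coe_evalRingHom, eval_C, hD]
  have hP0 : hirotaMiwa (C p) (C q) (C r) D n m h = 0 := by
    refine eq_zero_of_eval_eq_zero_of_eval_ne_zero (D := D n m h) ?_ fun t ht => ?_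
    · intro h0
      simpa [hD] using congr_arg (eval 0) h0
    · rw [hP]
      exact H t (isUnit_iff_ne_zero.2 (hD t n m h ▸ ht))
  simpa [hP] using congr_arg (eval 1) hP0

end HirotaMiwa

section Soliton

variable {K : Type*} [Field K] {ι ι' : Type*}

def planeWave (k : ι → K) (p q r : K) (n m h : ℤ) (i : ι) : K :=
  (p + k i) ^ n * (q + k i) ^ m * (r + k i) ^ h

def dualPlaneWave (k' : ι' → K) (p q r : K) (n m h : ℤ) (j : ι') : K :=
  (p - k' j) ^ (-n) * (q - k' j) ^ (-m) * (r - k' j) ^ (-h)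

variable {k : ι → K} {k' : ι' → K} {p q r : K}

theorem planeWave_shift₁ (hp : ∀ i, p + k i ≠ 0) (n m h : ℤ) (i : ι) :
    planeWave k p q r (n + 1) m h i = (p + k i) * planeWave k p q r n m h i := by
  rw [planeWave, planeWave, zpow_add_one₀ (hp i)]
  ring

theorem planeWave_shift₂ (hq : ∀ i, q + k i ≠ 0) (n m h : ℤ) (i : ι) :
    planeWave k p q r n (m + 1) h i = (q + k i) * planeWave k p q r n m h i := by
  rw [planeWave, planeWave, zpow_add_one₀ (hq i)]
  ring

theorem planeWave_shift₃ (hr : ∀ i, r + k i ≠ 0) (n m h : ℤ) (i : ι) :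
    planeWave k p q r n m (h + 1) i = (r + k i) * planeWave k p q r n m h i := by
  rw [planeWave, planeWave, zpow_add_one₀ (hr i)]
  ring

theorem dualPlaneWave_shift₁ (hp : ∀ j, p - k' j ≠ 0) (n m h : ℤ) (j : ι') :
    (p - k' j) * dualPlaneWave k' p q r (n + 1) m h j = dualPlaneWave k' p q r n m h j := by
  rw [dualPlaneWave, dualPlaneWave, neg_add, zpow_add₀ (hp j), _root_.zpow_neg_one]
  field_simp [hp j]

theorem dualPlaneWave_shift₂ (hq : ∀ j, q - k' j ≠ 0) (n m h : ℤ) (j : ι') :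
    (q - k' j) * dualPlaneWave k' p q r n (m + 1) h j = dualPlaneWave k' p q r n m h j := by
  rw [dualPlaneWave, dualPlaneWave, neg_add, zpow_add₀ (hq j), _root_.zpow_neg_one]
  field_simp [hq j]

theorem dualPlaneWave_shift₃ (hr : ∀ j, r - k' j ≠ 0) (n m h : ℤ) (j : ι') :
    (r - k' j) * dualPlaneWave k' p q r n m (h + 1) j = dualPlaneWave k' p q r n m h j := by
  rw [dualPlaneWave, dualPlaneWave, neg_add, zpow_add₀ (hr j), _root_.zpow_neg_one]
  field_simp [hr j]

variable [Fintype ι] [Fintype ι'] [DecidableEq ι]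

theorem hirotaMiwa_det_soliton_of_isUnit (A : Matrix ι ι' K)
    (hp : ∀ i, p + k i ≠ 0) (hq : ∀ i, q + k i ≠ 0) (hr : ∀ i, r + k i ≠ 0)
    (hp' : ∀ j, p - k' j ≠ 0) (hq' : ∀ j, q - k' j ≠ 0) (hr' : ∀ j, r - k' j ≠ 0)
    (hk : ∀ i j, k i + k' j ≠ 0) (n m h : ℤ)
    (hB : IsUnit (1 + A * cauchyMatrix k k' (planeWave k p q r n m h)
      (dualPlaneWave k' p q r n m h)).det) :
    hirotaMiwa p q r (fun a b c => (1 + A * cauchyMatrix k k' (planeWave k p q r a b c)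
      (dualPlaneWave k' p q r a b c)).det) n m h = 0 := by
  apply hirotaMiwa_eq_zero_of_miwa
  · exact miwa_det_one_add_mul_cauchyMatrix A hk hB (planeWave_shift₁ hp n m h)
      (planeWave_shift₂ hq n m h) (planeWave_shift₂ hq (n + 1) m h)
      (dualPlaneWave_shift₁ hp' n m h) (dualPlaneWave_shift₂ hq' n m h)
      (dualPlaneWave_shift₂ hq' (n + 1) m h) (dualPlaneWave_shift₁ hp' n (m + 1) h)
  · exact miwa_det_one_add_mul_cauchyMatrix A hk hB (planeWave_shift₂ hq n m h)
      (planeWave_shift₃ hr n m h) (planeWave_shift₃ hr n (m + 1) h)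
      (dualPlaneWave_shift₂ hq' n m h) (dualPlaneWave_shift₃ hr' n m h)
      (dualPlaneWave_shift₃ hr' n (m + 1) h) (dualPlaneWave_shift₂ hq' n m (h + 1))
  · exact miwa_det_one_add_mul_cauchyMatrix A hk hB (planeWave_shift₃ hr n m h)
      (planeWave_shift₁ hp n m h) (planeWave_shift₁ hp n m (h + 1))
      (dualPlaneWave_shift₃ hr' n m h) (dualPlaneWave_shift₁ hp' n m h)
      (dualPlaneWave_shift₁ hp' n m (h + 1)) (dualPlaneWave_shift₃ hr' (n + 1) m h)

theorem hirotaMiwa_det_soliton [Infinite K] (A : Matrix ι ι' K)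
    (hp : ∀ i, p + k i ≠ 0) (hq : ∀ i, q + k i ≠ 0) (hr : ∀ i, r + k i ≠ 0)
    (hp' : ∀ j, p - k' j ≠ 0) (hq' : ∀ j, q - k' j ≠ 0) (hr' : ∀ j, r - k' j ≠ 0)
    (hk : ∀ i j, k i + k' j ≠ 0) (n m h : ℤ) :
    hirotaMiwa p q r (fun a b c => (1 + A * cauchyMatrix k k' (planeWave k p q r a b c)
      (dualPlaneWave k' p q r a b c)).det) n m h = 0 := by
  refine hirotaMiwa_det_one_add_of_forall_isUnit p q r _ n m h fun t ht => ?_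
  simp only [← smul_mul] at ht ⊢
  exact hirotaMiwa_det_soliton_of_isUnit (t • A) hp hq hr hp' hq' hr' hk n m h ht

end Soliton

theorem hirota_miwa_soliton_solution_general
    (N N' : ℕ)
    (A : Matrix (Fin N) (Fin N') ℂ) (k : Fin N → ℂ) (k' : Fin N' → ℂ) (p q r : ℂ)
    (h1 : ∀ i, p + k i ≠ 0) (h2 : ∀ i, q + k i ≠ 0) (h3 : ∀ i, r + k i ≠ 0)
    (h4 : ∀ j, p - k' j ≠ 0) (h5 : ∀ j, q - k' j ≠ 0) (h6 : ∀ j, r - k' j ≠ 0)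
    (h7 : ∀ i j, k i + k' j ≠ 0)
    (M : ℤ → ℤ → ℤ → Matrix (Fin N') (Fin N) ℂ)
    (hM : ∀ (n m h : ℤ) (j : Fin N') (i : Fin N), M n m h j i =
      (p + k i) ^ n * (q + k i) ^ m * (r + k i) ^ h *
        (p - k' j) ^ (-n) * (q - k' j) ^ (-m) * (r - k' j) ^ (-h) / (k i + k' j))
    (τ : ℤ → ℤ → ℤ → ℂ)
    (hτ : ∀ n m h : ℤ, τ n m h = Matrix.det (1 + A * M n m h)) :
    ∀ n m h : ℤ,
      (p - q) * τ n m (h + 1) * τ (n + 1) (m + 1) h +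
      (q - r) * τ (n + 1) m h * τ n (m + 1) (h + 1) +
      (r - p) * τ n (m + 1) h * τ (n + 1) m (h + 1) = 0 := by
  have hMτ : τ = fun n m h => (1 + A * cauchyMatrix k k' (planeWave k p q r n m h)
      (dualPlaneWave k' p q r n m h)).det := by
    funext n m h
    rw [hτ]
    congr 3
    ext j i
    rw [hM, cauchyMatrix, of_apply, planeWave, dualPlaneWave]
    ring
  subst hMτ
  exact hirotaMiwa_det_soliton A h1 h2 h3 h4 h5 h6 h7

/-- The soliton τ-function `τ = det(1 + A·M)` built from the AKP Cauchy kernel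
and discrete plane-wave factors solves the Hirota–Miwa (discrete AKP) equation. -/
theorem hirota_miwa_soliton_solution
    (N N' : ℕ) (hN : 1 ≤ N) (hN' : 1 ≤ N')
    (A : Matrix (Fin N) (Fin N') ℂ) (k : Fin N → ℂ) (k' : Fin N' → ℂ) (p q r : ℂ)
    (h1 : ∀ i, p + k i ≠ 0) (h2 : ∀ i, q + k i ≠ 0) (h3 : ∀ i, r + k i ≠ 0)
    (h4 : ∀ j, p - k' j ≠ 0) (h5 : ∀ j, q - k' j ≠ 0) (h6 : ∀ j, r - k' j ≠ 0)
    (h7 : ∀ i j, k i + k' j ≠ 0)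
    (M : ℤ → ℤ → ℤ → Matrix (Fin N') (Fin N) ℂ)
    (hM : ∀ (n m h : ℤ) (j : Fin N') (i : Fin N), M n m h j i =
      (p + k i) ^ n * (q + k i) ^ m * (r + k i) ^ h *
        (p - k' j) ^ (-n) * (q - k' j) ^ (-m) * (r - k' j) ^ (-h) / (k i + k' j))
    (τ : ℤ → ℤ → ℤ → ℂ)
    (hτ : ∀ n m h : ℤ, τ n m h = Matrix.det (1 + A * M n m h)) :
    ∀ n m h : ℤ,
      (p - q) * τ n m (h + 1) * τ (n + 1) (m + 1) h +
      (q - r) * τ (n + 1) m h * τ n (m + 1) (h + 1) +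
      (r - p) * τ n (m + 1) h * τ (n + 1) m (h + 1) = 0 :=
  hirota_miwa_soliton_solution_general N N' A k k' p q r h1 h2 h3 h4 h5 h6 h7 M hM τ hτ
end

section
/- Let p, q ∈ ℂ and let τ : ℤ² → ℂ be nowhere zero and satisfy, for all (n,m) ∈ ℤ², the two bilinear discrete KdV equations (p+q) τ(n−1,m+1) τ(n+1,m) + (p−q) τ(n−1,m) τ(n+1,m+1) = 2p τ(n,m) τ(n,m+1) and (p+q) τ(n+1,m−1) τ(n,m+1) − (p−q) τ(n,m−1) τ(n+1,m+1) = 2q τ(n,m) τ(n+1,m). Then τ also satisfies the discrete-time Toda equation (p−q)² τ(n+1,m+1) τ(n−1,m−1) − (p+q)² τ(n+1,m−1) τ(n−1,m+1) + 4pq τ(n,m)² = 0 for all (n,m) ∈ ℤ². -/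
/-- A nowhere-vanishing solution of the two bilinear discrete KdV equations
also satisfies the discrete-time Toda equation. -/
theorem dkdv_pair_implies_discrete_time_toda
    (p q : ℂ) (τ : ℤ → ℤ → ℂ) (hτ : ∀ n m : ℤ, τ n m ≠ 0)
    (h1 : ∀ n m : ℤ,
      (p + q) * τ (n - 1) (m + 1) * τ (n + 1) m +
        (p - q) * τ (n - 1) m * τ (n + 1) (m + 1) = 2 * p * τ n m * τ n (m + 1))
    (h2 : ∀ n m : ℤ,
      (p + q) * τ (n + 1) (m - 1) * τ n (m + 1) -
        (p - q) * τ n (m - 1) * τ (n + 1) (m + 1) = 2 * q * τ n m * τ (n + 1) m) :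
    ∀ n m : ℤ,
      (p - q) ^ 2 * τ (n + 1) (m + 1) * τ (n - 1) (m - 1) -
      (p + q) ^ 2 * τ (n + 1) (m - 1) * τ (n - 1) (m + 1) +
      4 * p * q * (τ n m) ^ 2 = 0 := by
  intro n m
  have e1 := h1 n m
  have e2 := h2 n m
  have e4 := h2 (n - 1) m
  have hn : n - 1 + 1 = n := by ring
  rw [hn] at e4
  have key :
      ((p - q) ^ 2 * τ (n + 1) (m + 1) * τ (n - 1) (m - 1) -
        (p + q) ^ 2 * τ (n + 1) (m - 1) * τ (n - 1) (m + 1) +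
        4 * p * q * (τ n m) ^ 2) * (τ (n - 1) m * τ n (m + 1)) = 0 := by
    have e14 : ((p + q) * τ (n - 1) (m + 1) * τ (n + 1) m +
          (p - q) * τ (n - 1) m * τ (n + 1) (m + 1)) *
        ((p + q) * τ n (m - 1) * τ (n - 1) (m + 1) -
          (p - q) * τ (n - 1) (m - 1) * τ n (m + 1)) =
        (2 * p * τ n m * τ n (m + 1)) * (2 * q * τ (n - 1) m * τ n m) := by
      rw [e1, e4]
    linear_combination ((p + q) * τ (n - 1) (m + 1) * τ (n + 1) m) * e4 -
      ((p + q) * τ (n - 1) (m + 1) * τ (n - 1) m) * e2 - e14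
  have hne : τ (n - 1) m * τ n (m + 1) ≠ 0 := mul_ne_zero (hτ _ _) (hτ _ _)
  exact (mul_eq_zero.mp key).resolve_right hne
end

section
/- Let N ≥ 1, α₁ ∈ ℂ, a : Fin N → ℂ, and k, ℓ : Fin N → ℂ with ℓ_s³ + α₁ ℓ_s = k_s³ + α₁ k_s for every s. Let p, q ∈ ℂ with p + k_t, q + k_t, p + ℓ_s, q + ℓ_s and k_t − ℓ_s all nonzero. For (n,m) ∈ ℤ² define the N × N matrix M(n,m) with entries M_{s,t} = (p+k_t)^n (q+k_t)^m (p+ℓ_s)^{−n} (q+ℓ_s)^{−m} / (k_t − ℓ_s), and set τ(n,m) = det(I + diag(a)·M(n,m)). Then τ satisfies the extended trilinear discrete Boussinesq equation for all (n,m) ∈ ℤ²: (p−q)² τ(n+1,m+1) τ(n,m) τ(n−1,m−1) − (3q²+α₁) τ(n+1,m) τ(n,m) τ(n−1,m) − (3p²+α₁) τ(n,m+1) τ(n,m) τ(n,m−1) + (p²+pq+q²+α₁) [τ(n−1,m+1) τ(n+1,m) τ(n,m−1) + τ(n+1,m−1) τ(n,m+1) τ(n−1,m)] = 0. -/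
open Matrix


open Matrix

variable {N : ℕ}

/-- column times row as a matrix -/
def cr (u v : Fin N → ℂ) : Matrix (Fin N) (Fin N) ℂ := Matrix.of fun i j => u i * v j

lemma cr_mulVec (u v x : Fin N → ℂ) : (cr u v).mulVec x = (v ⬝ᵥ x) • u := by
  funext i
  simp [cr, Matrix.mulVec, dotProduct, Finset.sum_mul, Finset.mul_sum, mul_assoc,
    mul_comm, mul_left_comm]

lemma sandwich (Φ : Matrix (Fin N) (Fin N) ℂ) (u v f g : Fin N → ℂ) :
    f ⬝ᵥ (Φ * cr u v * Φ).mulVec g = (f ⬝ᵥ Φ.mulVec u) * (v ⬝ᵥ Φ.mulVec g) := by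
  rw [← Matrix.mulVec_mulVec, ← Matrix.mulVec_mulVec, cr_mulVec, Matrix.mulVec_smul,
    dotProduct_smul]
  simp [mul_comm]

lemma dot_scale_left (h f y : Fin N → ℂ) (Φ : Matrix (Fin N) (Fin N) ℂ) :
    (fun t => h t * f t) ⬝ᵥ Φ.mulVec y
      = f ⬝ᵥ ((Matrix.diagonal h) * Φ).mulVec y := by
  rw [← Matrix.mulVec_mulVec]
  simp [dotProduct, Matrix.mulVec_diagonal]
  exact Finset.sum_congr rfl fun t _ => by ring

lemma dot_scale_right (h g : Fin N → ℂ) (Φ : Matrix (Fin N) (Fin N) ℂ) (f : Fin N → ℂ) :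
    f ⬝ᵥ Φ.mulVec (fun s => h s * g s)
      = f ⬝ᵥ (Φ * Matrix.diagonal h).mulVec g := by
  simp [Matrix.mulVec, dotProduct, Matrix.mul_diagonal, mul_assoc]

lemma star_general (B Φ : Matrix (Fin N) (Fin N) ℂ) (hΦB : Φ * B = 1) (hBΦ : B * Φ = 1)
    (gk z0 z1 z2 rA r1 r0 : Fin N → ℂ)
    (hGB : B * Matrix.diagonal gk - Matrix.diagonal gk * B = cr z0 rA + cr z1 r1 + cr z2 r0)
    (f g : Fin N → ℂ) :
    (fun t => gk t * f t) ⬝ᵥ Φ.mulVec g - f ⬝ᵥ Φ.mulVec (fun s => gk s * g s)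
    = (f ⬝ᵥ Φ.mulVec z0) * (rA ⬝ᵥ Φ.mulVec g)
      + (f ⬝ᵥ Φ.mulVec z1) * (r1 ⬝ᵥ Φ.mulVec g)
      + (f ⬝ᵥ Φ.mulVec z2) * (r0 ⬝ᵥ Φ.mulVec g) := by
  rw [dot_scale_left, dot_scale_right]
  have key : Matrix.diagonal gk * Φ - Φ * Matrix.diagonal gk
      = Φ * (cr z0 rA + cr z1 r1 + cr z2 r0) * Φ := by
    rw [← hGB]
    calc Matrix.diagonal gk * Φ - Φ * Matrix.diagonal gk
        = (Φ * B) * (Matrix.diagonal gk * Φ) - (Φ * Matrix.diagonal gk) * (B * Φ) := by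
          rw [hΦB, hBΦ]; simp
      _ = Φ * (B * Matrix.diagonal gk - Matrix.diagonal gk * B) * Φ := by
          simp only [Matrix.mul_sub, Matrix.sub_mul, Matrix.mul_assoc]
  have lhs_eq : f ⬝ᵥ (Matrix.diagonal gk * Φ).mulVec g - f ⬝ᵥ (Φ * Matrix.diagonal gk).mulVec g
      = f ⬝ᵥ ((Matrix.diagonal gk * Φ - Φ * Matrix.diagonal gk).mulVec g) := by
    rw [Matrix.sub_mulVec, dotProduct_sub]
  rw [lhs_eq, key]
  rw [Matrix.mul_add, Matrix.add_mul, Matrix.mul_add, Matrix.add_mul]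
  rw [Matrix.add_mulVec, Matrix.add_mulVec, dotProduct_add, dotProduct_add]
  rw [sandwich, sandwich, sandwich]

lemma det_add_rank2 (B : Matrix (Fin N) (Fin N) ℂ) (hB : IsUnit B.det)
    (u₁ u₂ v₁ v₂ : Fin N → ℂ) :
    (B + (cr u₁ v₁ + cr u₂ v₂)).det
      = B.det * ((1 + v₁ ⬝ᵥ B⁻¹.mulVec u₁) * (1 + v₂ ⬝ᵥ B⁻¹.mulVec u₂)
          - (v₁ ⬝ᵥ B⁻¹.mulVec u₂) * (v₂ ⬝ᵥ B⁻¹.mulVec u₁)) := by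
  set U : Matrix (Fin N) (Fin 2) ℂ := Matrix.of (fun i (j : Fin 2) => ![u₁, u₂] j i)
  set V : Matrix (Fin 2) (Fin N) ℂ := Matrix.of (fun (j : Fin 2) t => ![v₁, v₂] j t)
  have hUV : cr u₁ v₁ + cr u₂ v₂ = U * V := by
    ext i j
    simp [cr, U, V, Matrix.mul_apply, Fin.sum_univ_two]
  rw [hUV]
  have hBB : B * B⁻¹ = 1 := Matrix.mul_nonsing_inv B hB
  have h1 : B + U * V = B * (1 + (B⁻¹ * U) * V) := by
    rw [Matrix.mul_add, Matrix.mul_one, ← Matrix.mul_assoc, ← Matrix.mul_assoc, hBB,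
      Matrix.one_mul]
  rw [h1, Matrix.det_mul, Matrix.det_one_add_mul_comm]
  congr 1
  rw [Matrix.det_fin_two]
  have e : ∀ (i j : Fin 2), (V * (B⁻¹ * U)) i j =
      (![v₁, v₂] i) ⬝ᵥ B⁻¹.mulVec (![u₁, u₂] j) := by
    intro i j
    simp [Matrix.mul_apply, Matrix.mulVec, dotProduct, U, V, Finset.mul_sum,
      Finset.sum_mul, mul_assoc]
  simp only [Matrix.add_apply, Matrix.one_apply, e]
  norm_num

lemma det_add_rank1 (B : Matrix (Fin N) (Fin N) ℂ) (hB : IsUnit B.det)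
    (u v : Fin N → ℂ) :
    (B + cr u v).det = B.det * (1 + v ⬝ᵥ B⁻¹.mulVec u) := by
  have h := det_add_rank2 B hB u 0 v 0
  have hz : cr (0 : Fin N → ℂ) (0 : Fin N → ℂ) = 0 := by
    ext i j; simp [cr]
  rw [hz, add_zero] at h
  rw [h]
  simp


-- shift (+1,0): needs (p+κ), (p+λ)
lemma entry_p1 (p κ lam X Y Z W bb : ℂ) (hA : p+κ ≠ 0) (hC : p+lam ≠ 0) (hd : κ - lam ≠ 0) :
    bb * (X*(p+κ) * Y * (Z*(p+lam)⁻¹) * W / (κ - lam))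
      = bb * (X*Y*Z*W/(κ-lam)) + (bb*(Z*W)*(p+lam)⁻¹) * (X*Y) := by
  field_simp
  ring

-- shift (−1,0)
lemma entry_m1 (p κ lam X Y Z W bb : ℂ) (hA : p+κ ≠ 0) (hC : p+lam ≠ 0) (hd : κ - lam ≠ 0) :
    bb * (X*(p+κ)⁻¹ * Y * (Z*(p+lam)) * W / (κ - lam))
      = bb * (X*Y*Z*W/(κ-lam)) + (-(bb*(Z*W))) * (X*Y*(p+κ)⁻¹) := by
  field_simp
  ring

-- shift (+1,+1)
lemma entry_pp (p q κ lam X Y Z W bb : ℂ) (hA : p+κ ≠ 0) (hB : q+κ ≠ 0)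
    (hC : p+lam ≠ 0) (hD : q+lam ≠ 0) (hd : κ - lam ≠ 0) :
    bb * ((X*(p+κ)) * (Y*(q+κ)) * (Z*(p+lam)⁻¹) * (W*(q+lam)⁻¹) / (κ - lam))
      = bb * (X*Y*Z*W/(κ-lam)) + (bb*(Z*W)*(q+lam)⁻¹) * (X*Y)
        + (bb*(Z*W)*((p+lam)⁻¹*(q+lam)⁻¹)) * (X*Y*(q+κ)) := by
  field_simp
  ring

-- shift (−1,−1)
lemma entry_mm (p q κ lam X Y Z W bb : ℂ) (hA : p+κ ≠ 0) (hB : q+κ ≠ 0)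
    (hC : p+lam ≠ 0) (hD : q+lam ≠ 0) (hd : κ - lam ≠ 0) :
    bb * ((X*(p+κ)⁻¹) * (Y*(q+κ)⁻¹) * (Z*(p+lam)) * (W*(q+lam)) / (κ - lam))
      = bb * (X*Y*Z*W/(κ-lam)) + (-(bb*(Z*W))) * (X*Y*(p+κ)⁻¹)
        + (-(bb*(Z*W)*(p+lam))) * (X*Y*((p+κ)⁻¹*(q+κ)⁻¹)) := by
  field_simp
  ring

-- shift (−1,+1)
lemma entry_mp (p q κ lam X Y Z W bb : ℂ) (hA : p+κ ≠ 0) (hB : q+κ ≠ 0)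
    (hC : p+lam ≠ 0) (hD : q+lam ≠ 0) (hd : κ - lam ≠ 0) :
    bb * ((X*(p+κ)⁻¹) * (Y*(q+κ)) * (Z*(p+lam)) * (W*(q+lam)⁻¹) / (κ - lam))
      = bb * (X*Y*Z*W/(κ-lam)) + ((p-q) * (bb*(Z*W)*(q+lam)⁻¹)) * (X*Y*(p+κ)⁻¹) := by
  field_simp
  ring


lemma entry_G (α₁ κ lam X Y Z W bb : ℂ) (hd : κ - lam ≠ 0) :
    bb * (X*Y*Z*W/(κ-lam)) * (κ^3+α₁*κ) - (lam^3+α₁*lam) * (bb * (X*Y*Z*W/(κ-lam)))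
      = (bb*(Z*W)) * ((X*Y)*(κ^2+α₁)) + (bb*(Z*W)*lam) * ((X*Y)*κ)
        + (bb*(Z*W)*lam^2) * (X*Y) := by
  field_simp
  ring


set_option maxHeartbeats 2000000 in
lemma key_algebra (p q w S0P SP0 S0Q SQ0 SPQ SQP S1P S1Q SP1 SQ1
    S2P S2Q SP2 SQ2 SPP SQQ S0PQ S1PQ SPQ0 SPQ1 : ℂ)
    (hPP : (S2P - p*S1P + (p^2+w)*S0P - (p^3+w*p)*SPP)
         - (SP2 - p*SP1 + (p^2+w)*SP0 - (p^3+w*p)*SPP)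
         = SP0*(S2P + w*S0P) + SP1*S1P + SP2*S0P)
    (hPQ : (S2Q - p*S1Q + (p^2+w)*S0Q - (p^3+w*p)*SPQ)
         - (SP2 - q*SP1 + (q^2+w)*SP0 - (q^3+w*q)*SPQ)
         = SP0*(S2Q + w*S0Q) + SP1*S1Q + SP2*S0Q)
    (hQP : (S2P - q*S1P + (q^2+w)*S0P - (q^3+w*q)*SQP)
         - (SQ2 - p*SQ1 + (p^2+w)*SQ0 - (p^3+w*p)*SQP)
         = SQ0*(S2P + w*S0P) + SQ1*S1P + SQ2*S0P)
    (hQQ : (S2Q - q*S1Q + (q^2+w)*S0Q - (q^3+w*q)*SQQ)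
         - (SQ2 - q*SQ1 + (q^2+w)*SQ0 - (q^3+w*q)*SQQ)
         = SQ0*(S2Q + w*S0Q) + SQ1*S1Q + SQ2*S0Q)
    (hPF1 : (q-p)*S0PQ = S0P - S0Q)
    (hPF2 : (q-p)*S1PQ = S1P - S1Q)
    (hPF3 : (q-p)*SPQ0 = SP0 - SQ0)
    (hPF4 : (q-p)*SPQ1 = SP1 - SQ1) :
    (p-q)^2 * ((1 + S0Q)*(1 + q*S0PQ + S1PQ) - S0PQ*(q*S0Q + S1Q))
            * ((1 - SP0)*(1 - p*SPQ0 - SPQ1) - (p*SP0 + SP1)*SPQ0)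
    - (3*q^2+w) * (1 + S0P) * (1 - SP0)
    - (3*p^2+w) * (1 + S0Q) * (1 - SQ0)
    + (p^2+p*q+q^2+w) * ((1 + (p-q)*SPQ) * (1 + S0P) * (1 - SQ0)
                       + (1 + (q-p)*SQP) * (1 + S0Q) * (1 - SP0)) = 0 := by
  linear_combination
    ((1 + S0Q)*(1 - SQ0))*hPP - ((1 + S0Q)*(1 - SP0))*hQP
    - ((1 + S0P)*(1 - SQ0))*hPQ + ((1 - SP0)*(1 + S0P))*hQQ
    + (- q*S1Q + q*S1Q*SPQ1 + q*S1Q*SP1*SPQ0 + q*SP0*S1Q - q*SP0*S1Q*SPQ1 + q^2 - q^2*SPQ1 - q^2*SP1*SPQ0 - q^2*SP0 + q^2*SP0*SPQ1 + p*S1Q - p*S1Q*SPQ1 - p*S1Q*SP1*SPQ0 - p*SP0*S1Q + p*SP0*S1Q*SPQ1 - p*q + p*q*SPQ1 + p*q*SP1*SPQ0 + p*q*S1Q*SPQ0 + p*q*SP0 - p*q*SP0*SPQ1 - p*q^2*SPQ0 - p^2*S1Q*SPQ0 + p^2*q*SPQ0)*hPF1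
    + (q - q*SPQ1 - q*SP1*SPQ0 + q*S0Q - q*S0Q*SPQ1 - q*S0Q*SP1*SPQ0 - q*SP0 + q*SP0*SPQ1 - q*SP0*S0Q + q*SP0*S0Q*SPQ1 - p + p*SPQ1 + p*SP1*SPQ0 - p*S0Q + p*S0Q*SPQ1 + p*S0Q*SP1*SPQ0 + p*SP0 - p*SP0*SPQ1 + p*SP0*S0Q - p*SP0*S0Q*SPQ1 - p*q*SPQ0 - p*q*S0Q*SPQ0 + p^2*SPQ0 + p^2*S0Q*SPQ0)*hPF2
    + (S1Q*SP1 - S1P*SP1 - S0Q*S1P*SP1 + S0P*S1Q*SP1 - q*SP1 - q*S0P*SP1 + p*SP1 + p*S1Q - p*S1P + p*S0Q*SP1 - p*S0Q*S1P + p*S0P*S1Q - p*q - p*q*S0P + p^2 + p^2*S0Q)*hPF3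
    + (S1Q - S1P - S0Q*S1P - SP0*S1Q + SP0*S1P + SP0*S0Q*S1P + S0P*S1Q - S0P*SP0*S1Q - q + q*SP0 - q*S0P + q*S0P*SP0 + p + p*S0Q - p*SP0 - p*SP0*S0Q)*hPF4


lemma colG (α₁ pp lam R : ℂ) (hC : pp + lam ≠ 0) :
    (lam ^ 3 + α₁ * lam) * (R * (pp + lam)⁻¹)
      = R * lam ^ 2 - pp * (R * lam) + (pp ^ 2 + α₁) * R
        - (pp ^ 3 + α₁ * pp) * (R * (pp + lam)⁻¹) := by
  field_simp
  ring

lemma pfz (pp qq lam R : ℂ) (hC : pp + lam ≠ 0) (hD : qq + lam ≠ 0) :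
    R * (pp + lam)⁻¹ - R * (qq + lam)⁻¹
      = (qq - pp) * (R * ((pp + lam)⁻¹ * (qq + lam)⁻¹)) := by
  field_simp
  ring

set_option maxHeartbeats 4000000 in


lemma main_identity (N : ℕ) (α₁ : ℂ) (k ℓ : Fin N → ℂ)
    (hcurve : ∀ s, (ℓ s) ^ 3 + α₁ * ℓ s = (k s) ^ 3 + α₁ * k s)
    (p q : ℂ)
    (h1 : ∀ t, p + k t ≠ 0) (h2 : ∀ t, q + k t ≠ 0)
    (h3 : ∀ s, p + ℓ s ≠ 0) (h4 : ∀ s, q + ℓ s ≠ 0)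
    (h5 : ∀ s t, k t - ℓ s ≠ 0)
    (M : ℤ → ℤ → Matrix (Fin N) (Fin N) ℂ)
    (hM : ∀ (n m : ℤ) (s t : Fin N), M n m s t =
      (p + k t) ^ n * (q + k t) ^ m * (p + ℓ s) ^ (-n) * (q + ℓ s) ^ (-m) / (k t - ℓ s))
    (n m : ℤ) (b : Fin N → ℂ)
    (hB : IsUnit (1 + Matrix.diagonal b * M n m).det) :
    (p - q) ^ 2 * (1 + Matrix.diagonal b * M (n + 1) (m + 1)).det
        * (1 + Matrix.diagonal b * M n m).det
        * (1 + Matrix.diagonal b * M (n - 1) (m - 1)).det -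
      (3 * q ^ 2 + α₁) * (1 + Matrix.diagonal b * M (n + 1) m).det
        * (1 + Matrix.diagonal b * M n m).det
        * (1 + Matrix.diagonal b * M (n - 1) m).det -
      (3 * p ^ 2 + α₁) * (1 + Matrix.diagonal b * M n (m + 1)).det
        * (1 + Matrix.diagonal b * M n m).det
        * (1 + Matrix.diagonal b * M n (m - 1)).det +
      (p ^ 2 + p * q + q ^ 2 + α₁) *
        ((1 + Matrix.diagonal b * M (n - 1) (m + 1)).det
          * (1 + Matrix.diagonal b * M (n + 1) m).det
          * (1 + Matrix.diagonal b * M n (m - 1)).det +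
         (1 + Matrix.diagonal b * M (n + 1) (m - 1)).det
          * (1 + Matrix.diagonal b * M n (m + 1)).det
          * (1 + Matrix.diagonal b * M (n - 1) m).det) = 0 := by
  set B : Matrix (Fin N) (Fin N) ℂ := 1 + Matrix.diagonal b * M n m with hBdef
  have hinv1 : B⁻¹ * B = 1 := Matrix.nonsing_inv_mul B hB
  have hinv2 : B * B⁻¹ = 1 := Matrix.mul_nonsing_inv B hB
  -- entrywise matrix identities for the eight shifted matrices
  have hmat10 : (1 : Matrix (Fin N) (Fin N) ℂ) + Matrix.diagonal b * M (n + 1) m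
      = B + cr (fun s => b s * ((p + ℓ s) ^ (-n) * (q + ℓ s) ^ (-m)) * (p + ℓ s)⁻¹) (fun t => (p + k t) ^ n * (q + k t) ^ m) := by
    have hstep : Matrix.diagonal b * M (n + 1) m = Matrix.diagonal b * M n m
        + cr (fun s => b s * ((p + ℓ s) ^ (-n) * (q + ℓ s) ^ (-m)) * (p + ℓ s)⁻¹) (fun t => (p + k t) ^ n * (q + k t) ^ m) := by
      ext i j
      simp only [Matrix.add_apply, Matrix.diagonal_mul, cr, Matrix.of_apply]
      rw [hM (n + 1) m i j, hM n m i j]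
      rw [show ((p + k j) ^ (n + 1) : ℂ) = (p + k j) ^ n * (p + k j) from zpow_add_one₀ (h1 j) n]
      rw [show ((-(n + 1)) : ℤ) = -n + -1 by ring, zpow_add₀ (h3 i), show ((p + ℓ i) ^ (-1 : ℤ) : ℂ) = (p + ℓ i)⁻¹ from zpow_neg_one (p + ℓ i)]
      linear_combination entry_p1 p (k j) (ℓ i) ((p + k j) ^ n) ((q + k j) ^ m)
        ((p + ℓ i) ^ (-n)) ((q + ℓ i) ^ (-m)) (b i) (h1 j) (h3 i) (h5 i j)
    rw [hBdef, hstep, add_assoc]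
  have hmat01 : (1 : Matrix (Fin N) (Fin N) ℂ) + Matrix.diagonal b * M n (m + 1)
      = B + cr (fun s => b s * ((p + ℓ s) ^ (-n) * (q + ℓ s) ^ (-m)) * (q + ℓ s)⁻¹) (fun t => (p + k t) ^ n * (q + k t) ^ m) := by
    have hstep : Matrix.diagonal b * M n (m + 1) = Matrix.diagonal b * M n m
        + cr (fun s => b s * ((p + ℓ s) ^ (-n) * (q + ℓ s) ^ (-m)) * (q + ℓ s)⁻¹) (fun t => (p + k t) ^ n * (q + k t) ^ m) := by
      ext i j
      simp only [Matrix.add_apply, Matrix.diagonal_mul, cr, Matrix.of_apply]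
      rw [hM n (m + 1) i j, hM n m i j]
      rw [show ((q + k j) ^ (m + 1) : ℂ) = (q + k j) ^ m * (q + k j) from zpow_add_one₀ (h2 j) m]
      rw [show ((-(m + 1)) : ℤ) = -m + -1 by ring, zpow_add₀ (h4 i), show ((q + ℓ i) ^ (-1 : ℤ) : ℂ) = (q + ℓ i)⁻¹ from zpow_neg_one (q + ℓ i)]
      linear_combination entry_p1 q (k j) (ℓ i) ((q + k j) ^ m) ((p + k j) ^ n)
        ((q + ℓ i) ^ (-m)) ((p + ℓ i) ^ (-n)) (b i) (h2 j) (h4 i) (h5 i j)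
    rw [hBdef, hstep, add_assoc]
  have hmatm10 : (1 : Matrix (Fin N) (Fin N) ℂ) + Matrix.diagonal b * M (n - 1) m
      = B + cr (fun s => b s * ((p + ℓ s) ^ (-n) * (q + ℓ s) ^ (-m))) (-(fun t => (p + k t) ^ n * (q + k t) ^ m * (p + k t)⁻¹)) := by
    have hstep : Matrix.diagonal b * M (n - 1) m = Matrix.diagonal b * M n m
        + cr (fun s => b s * ((p + ℓ s) ^ (-n) * (q + ℓ s) ^ (-m))) (-(fun t => (p + k t) ^ n * (q + k t) ^ m * (p + k t)⁻¹)) := by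
      ext i j
      simp only [Matrix.add_apply, Matrix.diagonal_mul, cr, Matrix.of_apply, Pi.neg_apply]
      rw [hM (n - 1) m i j, hM n m i j]
      rw [show ((p + k j) ^ (n - 1) : ℂ) = (p + k j) ^ n * (p + k j)⁻¹ from zpow_sub_one₀ (h1 j) n]
      rw [show ((-(n - 1)) : ℤ) = -n + 1 by ring, zpow_add₀ (h3 i), zpow_one]
      linear_combination entry_m1 p (k j) (ℓ i) ((p + k j) ^ n) ((q + k j) ^ m)
        ((p + ℓ i) ^ (-n)) ((q + ℓ i) ^ (-m)) (b i) (h1 j) (h3 i) (h5 i j)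
    rw [hBdef, hstep, add_assoc]
  have hmat0m1 : (1 : Matrix (Fin N) (Fin N) ℂ) + Matrix.diagonal b * M n (m - 1)
      = B + cr (fun s => b s * ((p + ℓ s) ^ (-n) * (q + ℓ s) ^ (-m))) (-(fun t => (p + k t) ^ n * (q + k t) ^ m * (q + k t)⁻¹)) := by
    have hstep : Matrix.diagonal b * M n (m - 1) = Matrix.diagonal b * M n m
        + cr (fun s => b s * ((p + ℓ s) ^ (-n) * (q + ℓ s) ^ (-m))) (-(fun t => (p + k t) ^ n * (q + k t) ^ m * (q + k t)⁻¹)) := by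
      ext i j
      simp only [Matrix.add_apply, Matrix.diagonal_mul, cr, Matrix.of_apply, Pi.neg_apply]
      rw [hM n (m - 1) i j, hM n m i j]
      rw [show ((q + k j) ^ (m - 1) : ℂ) = (q + k j) ^ m * (q + k j)⁻¹ from zpow_sub_one₀ (h2 j) m]
      rw [show ((-(m - 1)) : ℤ) = -m + 1 by ring, zpow_add₀ (h4 i), zpow_one]
      linear_combination entry_m1 q (k j) (ℓ i) ((q + k j) ^ m) ((p + k j) ^ n)
        ((q + ℓ i) ^ (-m)) ((p + ℓ i) ^ (-n)) (b i) (h2 j) (h4 i) (h5 i j)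
    rw [hBdef, hstep, add_assoc]
  have hmat11 : (1 : Matrix (Fin N) (Fin N) ℂ) + Matrix.diagonal b * M (n + 1) (m + 1)
      = B + (cr (fun s => b s * ((p + ℓ s) ^ (-n) * (q + ℓ s) ^ (-m)) * (q + ℓ s)⁻¹) (fun t => (p + k t) ^ n * (q + k t) ^ m) + cr (fun s => b s * ((p + ℓ s) ^ (-n) * (q + ℓ s) ^ (-m)) * ((p + ℓ s)⁻¹ * (q + ℓ s)⁻¹)) (q • (fun t => (p + k t) ^ n * (q + k t) ^ m) + (fun t => (p + k t) ^ n * (q + k t) ^ m * k t))) := by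
    have hstep : Matrix.diagonal b * M (n + 1) (m + 1) = Matrix.diagonal b * M n m
        + (cr (fun s => b s * ((p + ℓ s) ^ (-n) * (q + ℓ s) ^ (-m)) * (q + ℓ s)⁻¹) (fun t => (p + k t) ^ n * (q + k t) ^ m) + cr (fun s => b s * ((p + ℓ s) ^ (-n) * (q + ℓ s) ^ (-m)) * ((p + ℓ s)⁻¹ * (q + ℓ s)⁻¹)) (q • (fun t => (p + k t) ^ n * (q + k t) ^ m) + (fun t => (p + k t) ^ n * (q + k t) ^ m * k t))) := by
      ext i j
      simp only [Matrix.add_apply, Matrix.diagonal_mul, cr, Matrix.of_apply, Pi.add_apply,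
        Pi.smul_apply, smul_eq_mul]
      rw [hM (n + 1) (m + 1) i j, hM n m i j]
      rw [show ((p + k j) ^ (n + 1) : ℂ) = (p + k j) ^ n * (p + k j) from zpow_add_one₀ (h1 j) n]
      rw [show ((q + k j) ^ (m + 1) : ℂ) = (q + k j) ^ m * (q + k j) from zpow_add_one₀ (h2 j) m]
      rw [show ((-(n + 1)) : ℤ) = -n + -1 by ring, zpow_add₀ (h3 i), show ((p + ℓ i) ^ (-1 : ℤ) : ℂ) = (p + ℓ i)⁻¹ from zpow_neg_one (p + ℓ i)]
      rw [show ((-(m + 1)) : ℤ) = -m + -1 by ring, zpow_add₀ (h4 i), show ((q + ℓ i) ^ (-1 : ℤ) : ℂ) = (q + ℓ i)⁻¹ from zpow_neg_one (q + ℓ i)]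
      linear_combination entry_pp p q (k j) (ℓ i) ((p + k j) ^ n) ((q + k j) ^ m)
        ((p + ℓ i) ^ (-n)) ((q + ℓ i) ^ (-m)) (b i) (h1 j) (h2 j) (h3 i) (h4 i) (h5 i j)
    rw [hBdef, hstep, add_assoc]
  have hmatmm : (1 : Matrix (Fin N) (Fin N) ℂ) + Matrix.diagonal b * M (n - 1) (m - 1)
      = B + (cr (fun s => b s * ((p + ℓ s) ^ (-n) * (q + ℓ s) ^ (-m))) (-(fun t => (p + k t) ^ n * (q + k t) ^ m * (p + k t)⁻¹)) + cr (p • (fun s => b s * ((p + ℓ s) ^ (-n) * (q + ℓ s) ^ (-m))) + (fun s => b s * ((p + ℓ s) ^ (-n) * (q + ℓ s) ^ (-m)) * ℓ s)) (-(fun t => (p + k t) ^ n * (q + k t) ^ m * ((p + k t)⁻¹ * (q + k t)⁻¹)))) := by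
    have hstep : Matrix.diagonal b * M (n - 1) (m - 1) = Matrix.diagonal b * M n m
        + (cr (fun s => b s * ((p + ℓ s) ^ (-n) * (q + ℓ s) ^ (-m))) (-(fun t => (p + k t) ^ n * (q + k t) ^ m * (p + k t)⁻¹)) + cr (p • (fun s => b s * ((p + ℓ s) ^ (-n) * (q + ℓ s) ^ (-m))) + (fun s => b s * ((p + ℓ s) ^ (-n) * (q + ℓ s) ^ (-m)) * ℓ s)) (-(fun t => (p + k t) ^ n * (q + k t) ^ m * ((p + k t)⁻¹ * (q + k t)⁻¹)))) := by
      ext i j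
      simp only [Matrix.add_apply, Matrix.diagonal_mul, cr, Matrix.of_apply, Pi.add_apply,
        Pi.smul_apply, Pi.neg_apply, smul_eq_mul]
      rw [hM (n - 1) (m - 1) i j, hM n m i j]
      rw [show ((p + k j) ^ (n - 1) : ℂ) = (p + k j) ^ n * (p + k j)⁻¹ from zpow_sub_one₀ (h1 j) n]
      rw [show ((q + k j) ^ (m - 1) : ℂ) = (q + k j) ^ m * (q + k j)⁻¹ from zpow_sub_one₀ (h2 j) m]
      rw [show ((-(n - 1)) : ℤ) = -n + 1 by ring, zpow_add₀ (h3 i), zpow_one]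
      rw [show ((-(m - 1)) : ℤ) = -m + 1 by ring, zpow_add₀ (h4 i), zpow_one]
      linear_combination entry_mm p q (k j) (ℓ i) ((p + k j) ^ n) ((q + k j) ^ m)
        ((p + ℓ i) ^ (-n)) ((q + ℓ i) ^ (-m)) (b i) (h1 j) (h2 j) (h3 i) (h4 i) (h5 i j)
    rw [hBdef, hstep, add_assoc]
  have hmatm11 : (1 : Matrix (Fin N) (Fin N) ℂ) + Matrix.diagonal b * M (n - 1) (m + 1)
      = B + cr (fun s => b s * ((p + ℓ s) ^ (-n) * (q + ℓ s) ^ (-m)) * (q + ℓ s)⁻¹) ((p - q) • (fun t => (p + k t) ^ n * (q + k t) ^ m * (p + k t)⁻¹)) := by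
    have hstep : Matrix.diagonal b * M (n - 1) (m + 1) = Matrix.diagonal b * M n m
        + cr (fun s => b s * ((p + ℓ s) ^ (-n) * (q + ℓ s) ^ (-m)) * (q + ℓ s)⁻¹) ((p - q) • (fun t => (p + k t) ^ n * (q + k t) ^ m * (p + k t)⁻¹)) := by
      ext i j
      simp only [Matrix.add_apply, Matrix.diagonal_mul, cr, Matrix.of_apply, Pi.smul_apply,
        smul_eq_mul]
      rw [hM (n - 1) (m + 1) i j, hM n m i j]
      rw [show ((p + k j) ^ (n - 1) : ℂ) = (p + k j) ^ n * (p + k j)⁻¹ from zpow_sub_one₀ (h1 j) n]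
      rw [show ((q + k j) ^ (m + 1) : ℂ) = (q + k j) ^ m * (q + k j) from zpow_add_one₀ (h2 j) m]
      rw [show ((-(n - 1)) : ℤ) = -n + 1 by ring, zpow_add₀ (h3 i), zpow_one]
      rw [show ((-(m + 1)) : ℤ) = -m + -1 by ring, zpow_add₀ (h4 i), show ((q + ℓ i) ^ (-1 : ℤ) : ℂ) = (q + ℓ i)⁻¹ from zpow_neg_one (q + ℓ i)]
      linear_combination entry_mp p q (k j) (ℓ i) ((p + k j) ^ n) ((q + k j) ^ m)
        ((p + ℓ i) ^ (-n)) ((q + ℓ i) ^ (-m)) (b i) (h1 j) (h2 j) (h3 i) (h4 i) (h5 i j)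
    rw [hBdef, hstep, add_assoc]
  have hmat1m1 : (1 : Matrix (Fin N) (Fin N) ℂ) + Matrix.diagonal b * M (n + 1) (m - 1)
      = B + cr (fun s => b s * ((p + ℓ s) ^ (-n) * (q + ℓ s) ^ (-m)) * (p + ℓ s)⁻¹) ((q - p) • (fun t => (p + k t) ^ n * (q + k t) ^ m * (q + k t)⁻¹)) := by
    have hstep : Matrix.diagonal b * M (n + 1) (m - 1) = Matrix.diagonal b * M n m
        + cr (fun s => b s * ((p + ℓ s) ^ (-n) * (q + ℓ s) ^ (-m)) * (p + ℓ s)⁻¹) ((q - p) • (fun t => (p + k t) ^ n * (q + k t) ^ m * (q + k t)⁻¹)) := by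
      ext i j
      simp only [Matrix.add_apply, Matrix.diagonal_mul, cr, Matrix.of_apply, Pi.smul_apply,
        smul_eq_mul]
      rw [hM (n + 1) (m - 1) i j, hM n m i j]
      rw [show ((p + k j) ^ (n + 1) : ℂ) = (p + k j) ^ n * (p + k j) from zpow_add_one₀ (h1 j) n]
      rw [show ((q + k j) ^ (m - 1) : ℂ) = (q + k j) ^ m * (q + k j)⁻¹ from zpow_sub_one₀ (h2 j) m]
      rw [show ((-(n + 1)) : ℤ) = -n + -1 by ring, zpow_add₀ (h3 i), show ((p + ℓ i) ^ (-1 : ℤ) : ℂ) = (p + ℓ i)⁻¹ from zpow_neg_one (p + ℓ i)]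
      rw [show ((-(m - 1)) : ℤ) = -m + 1 by ring, zpow_add₀ (h4 i), zpow_one]
      linear_combination entry_mp q p (k j) (ℓ i) ((q + k j) ^ m) ((p + k j) ^ n)
        ((q + ℓ i) ^ (-m)) ((p + ℓ i) ^ (-n)) (b i) (h2 j) (h1 j) (h4 i) (h3 i) (h5 i j)
    rw [hBdef, hstep, add_assoc]
  -- determinant formulas
  have hD10 := det_add_rank1 B hB (fun s => b s * ((p + ℓ s) ^ (-n) * (q + ℓ s) ^ (-m)) * (p + ℓ s)⁻¹) (fun t => (p + k t) ^ n * (q + k t) ^ m)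
  rw [← hmat10] at hD10
  have hD01 := det_add_rank1 B hB (fun s => b s * ((p + ℓ s) ^ (-n) * (q + ℓ s) ^ (-m)) * (q + ℓ s)⁻¹) (fun t => (p + k t) ^ n * (q + k t) ^ m)
  rw [← hmat01] at hD01
  have hDm10 := det_add_rank1 B hB (fun s => b s * ((p + ℓ s) ^ (-n) * (q + ℓ s) ^ (-m))) (-(fun t => (p + k t) ^ n * (q + k t) ^ m * (p + k t)⁻¹))
  rw [← hmatm10] at hDm10
  have hD0m1 := det_add_rank1 B hB (fun s => b s * ((p + ℓ s) ^ (-n) * (q + ℓ s) ^ (-m))) (-(fun t => (p + k t) ^ n * (q + k t) ^ m * (q + k t)⁻¹))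
  rw [← hmat0m1] at hD0m1
  have hD11 := det_add_rank2 B hB (fun s => b s * ((p + ℓ s) ^ (-n) * (q + ℓ s) ^ (-m)) * (q + ℓ s)⁻¹) (fun s => b s * ((p + ℓ s) ^ (-n) * (q + ℓ s) ^ (-m)) * ((p + ℓ s)⁻¹ * (q + ℓ s)⁻¹)) (fun t => (p + k t) ^ n * (q + k t) ^ m) (q • (fun t => (p + k t) ^ n * (q + k t) ^ m) + (fun t => (p + k t) ^ n * (q + k t) ^ m * k t))
  rw [← hmat11] at hD11
  have hDmm := det_add_rank2 B hB (fun s => b s * ((p + ℓ s) ^ (-n) * (q + ℓ s) ^ (-m))) (p • (fun s => b s * ((p + ℓ s) ^ (-n) * (q + ℓ s) ^ (-m))) + (fun s => b s * ((p + ℓ s) ^ (-n) * (q + ℓ s) ^ (-m)) * ℓ s)) (-(fun t => (p + k t) ^ n * (q + k t) ^ m * (p + k t)⁻¹)) (-(fun t => (p + k t) ^ n * (q + k t) ^ m * ((p + k t)⁻¹ * (q + k t)⁻¹)))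
  rw [← hmatmm] at hDmm
  have hDm11 := det_add_rank1 B hB (fun s => b s * ((p + ℓ s) ^ (-n) * (q + ℓ s) ^ (-m)) * (q + ℓ s)⁻¹) ((p - q) • (fun t => (p + k t) ^ n * (q + k t) ^ m * (p + k t)⁻¹))
  rw [← hmatm11] at hDm11
  have hD1m1 := det_add_rank1 B hB (fun s => b s * ((p + ℓ s) ^ (-n) * (q + ℓ s) ^ (-m)) * (p + ℓ s)⁻¹) ((q - p) • (fun t => (p + k t) ^ n * (q + k t) ^ m * (q + k t)⁻¹))
  rw [← hmat1m1] at hD1m1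
  simp only [neg_dotProduct, add_dotProduct, smul_dotProduct, smul_eq_mul,
    Matrix.mulVec_add, Matrix.mulVec_smul, dotProduct_add, dotProduct_smul]
    at hD10 hD01 hDm10 hD0m1 hD11 hDmm hDm11 hD1m1
  -- the cubic-curve (star) matrix identity
  have hGB : B * Matrix.diagonal (fun s => k s ^ 3 + α₁ * k s) - Matrix.diagonal (fun s => k s ^ 3 + α₁ * k s) * B
      = cr (fun s => b s * ((p + ℓ s) ^ (-n) * (q + ℓ s) ^ (-m))) (fun t => (p + k t) ^ n * (q + k t) ^ m * (k t ^ 2 + α₁)) + cr (fun s => b s * ((p + ℓ s) ^ (-n) * (q + ℓ s) ^ (-m)) * ℓ s) (fun t => (p + k t) ^ n * (q + k t) ^ m * k t) + cr (fun s => b s * ((p + ℓ s) ^ (-n) * (q + ℓ s) ^ (-m)) * ℓ s ^ 2) (fun t => (p + k t) ^ n * (q + k t) ^ m) := by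
    ext i j
    simp only [Matrix.sub_apply, Matrix.mul_diagonal, Matrix.diagonal_mul, Matrix.add_apply,
      cr, Matrix.of_apply, hBdef, Matrix.one_apply]
    by_cases hij : i = j
    · subst hij
      have h0 : (k i - ℓ i) * (k i ^ 2 + k i * ℓ i + ℓ i ^ 2 + α₁) = 0 := by
        linear_combination - hcurve i
      have hq0 : k i ^ 2 + k i * ℓ i + ℓ i ^ 2 + α₁ = 0 :=
        (mul_eq_zero.mp h0).resolve_left (h5 i i)
      simp only [if_pos rfl]
      rw [hM n m i i]
      linear_combination (-(b i * ((p + ℓ i) ^ (-n) * (q + ℓ i) ^ (-m))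
        * ((p + k i) ^ n * (q + k i) ^ m))) * hq0
    · simp only [if_neg hij]
      rw [hM n m i j, ← hcurve i]
      linear_combination entry_G α₁ (k j) (ℓ i) ((p + k j) ^ n) ((q + k j) ^ m)
        ((p + ℓ i) ^ (-n)) ((q + ℓ i) ^ (-m)) (b i) (h5 i j)
  have hstar := star_general B B⁻¹ hinv1 hinv2 (fun s => k s ^ 3 + α₁ * k s) (fun s => b s * ((p + ℓ s) ^ (-n) * (q + ℓ s) ^ (-m))) (fun s => b s * ((p + ℓ s) ^ (-n) * (q + ℓ s) ^ (-m)) * ℓ s) (fun s => b s * ((p + ℓ s) ^ (-n) * (q + ℓ s) ^ (-m)) * ℓ s ^ 2) (fun t => (p + k t) ^ n * (q + k t) ^ m * (k t ^ 2 + α₁)) (fun t => (p + k t) ^ n * (q + k t) ^ m * k t) (fun t => (p + k t) ^ n * (q + k t) ^ m) hGB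
  -- row and column reductions of G·f
  have hrowGP : (fun t => (k t ^ 3 + α₁ * k t) * ((p + k t) ^ n * (q + k t) ^ m * (p + k t)⁻¹))
      = (fun t => (p + k t) ^ n * (q + k t) ^ m * k t ^ 2) - p • (fun t => (p + k t) ^ n * (q + k t) ^ m * k t) + (p ^ 2 + α₁) • (fun t => (p + k t) ^ n * (q + k t) ^ m) - (p ^ 3 + α₁ * p) • (fun t => (p + k t) ^ n * (q + k t) ^ m * (p + k t)⁻¹) := by
    funext t
    simp only [Pi.sub_apply, Pi.add_apply, Pi.smul_apply, smul_eq_mul]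
    field_simp [h1 t]
    ring
  have hrowGQ : (fun t => (k t ^ 3 + α₁ * k t) * ((p + k t) ^ n * (q + k t) ^ m * (q + k t)⁻¹))
      = (fun t => (p + k t) ^ n * (q + k t) ^ m * k t ^ 2) - q • (fun t => (p + k t) ^ n * (q + k t) ^ m * k t) + (q ^ 2 + α₁) • (fun t => (p + k t) ^ n * (q + k t) ^ m) - (q ^ 3 + α₁ * q) • (fun t => (p + k t) ^ n * (q + k t) ^ m * (q + k t)⁻¹) := by
    funext t
    simp only [Pi.sub_apply, Pi.add_apply, Pi.smul_apply, smul_eq_mul]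
    field_simp [h2 t]
    ring
  have hcolGP : (fun s => (k s ^ 3 + α₁ * k s)
        * (b s * ((p + ℓ s) ^ (-n) * (q + ℓ s) ^ (-m)) * (p + ℓ s)⁻¹))
      = (fun s => b s * ((p + ℓ s) ^ (-n) * (q + ℓ s) ^ (-m)) * ℓ s ^ 2) - p • (fun s => b s * ((p + ℓ s) ^ (-n) * (q + ℓ s) ^ (-m)) * ℓ s) + (p ^ 2 + α₁) • (fun s => b s * ((p + ℓ s) ^ (-n) * (q + ℓ s) ^ (-m))) - (p ^ 3 + α₁ * p) • (fun s => b s * ((p + ℓ s) ^ (-n) * (q + ℓ s) ^ (-m)) * (p + ℓ s)⁻¹) := by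
    funext s
    simp only [Pi.sub_apply, Pi.add_apply, Pi.smul_apply, smul_eq_mul]
    rw [← hcurve s]
    linear_combination colG α₁ p (ℓ s) (b s * ((p + ℓ s) ^ (-n) * (q + ℓ s) ^ (-m))) (h3 s)
  have hcolGQ : (fun s => (k s ^ 3 + α₁ * k s)
        * (b s * ((p + ℓ s) ^ (-n) * (q + ℓ s) ^ (-m)) * (q + ℓ s)⁻¹))
      = (fun s => b s * ((p + ℓ s) ^ (-n) * (q + ℓ s) ^ (-m)) * ℓ s ^ 2) - q • (fun s => b s * ((p + ℓ s) ^ (-n) * (q + ℓ s) ^ (-m)) * ℓ s) + (q ^ 2 + α₁) • (fun s => b s * ((p + ℓ s) ^ (-n) * (q + ℓ s) ^ (-m))) - (q ^ 3 + α₁ * q) • (fun s => b s * ((p + ℓ s) ^ (-n) * (q + ℓ s) ^ (-m)) * (q + ℓ s)⁻¹) := by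
    funext s
    simp only [Pi.sub_apply, Pi.add_apply, Pi.smul_apply, smul_eq_mul]
    rw [← hcurve s]
    linear_combination colG α₁ q (ℓ s) (b s * ((p + ℓ s) ^ (-n) * (q + ℓ s) ^ (-m))) (h4 s)
  have hrA : (fun t => (p + k t) ^ n * (q + k t) ^ m * (k t ^ 2 + α₁)) = (fun t => (p + k t) ^ n * (q + k t) ^ m * k t ^ 2) + α₁ • (fun t => (p + k t) ^ n * (q + k t) ^ m) := by
    funext t
    simp only [Pi.add_apply, Pi.smul_apply, smul_eq_mul]
    ring
  have t1 : (fun t => (k t ^ 3 + α₁ * k t) * ((p + k t) ^ n * (q + k t) ^ m * (p + k t)⁻¹))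
        ⬝ᵥ B⁻¹.mulVec (fun s => b s * ((p + ℓ s) ^ (-n) * (q + ℓ s) ^ (-m)) * (p + ℓ s)⁻¹)
      - (fun t => (p + k t) ^ n * (q + k t) ^ m * (p + k t)⁻¹) ⬝ᵥ B⁻¹.mulVec (fun s => (k s ^ 3 + α₁ * k s)
        * (b s * ((p + ℓ s) ^ (-n) * (q + ℓ s) ^ (-m)) * (p + ℓ s)⁻¹))
      = ((fun t => (p + k t) ^ n * (q + k t) ^ m * (p + k t)⁻¹) ⬝ᵥ B⁻¹.mulVec (fun s => b s * ((p + ℓ s) ^ (-n) * (q + ℓ s) ^ (-m)))) * ((fun t => (p + k t) ^ n * (q + k t) ^ m * (k t ^ 2 + α₁)) ⬝ᵥ B⁻¹.mulVec (fun s => b s * ((p + ℓ s) ^ (-n) * (q + ℓ s) ^ (-m)) * (p + ℓ s)⁻¹)) + ((fun t => (p + k t) ^ n * (q + k t) ^ m * (p + k t)⁻¹) ⬝ᵥ B⁻¹.mulVec (fun s => b s * ((p + ℓ s) ^ (-n) * (q + ℓ s) ^ (-m)) * ℓ s)) * ((fun t => (p + k t) ^ n * (q + k t) ^ m * k t) ⬝ᵥ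 B⁻¹.mulVec (fun s => b s * ((p + ℓ s) ^ (-n) * (q + ℓ s) ^ (-m)) * (p + ℓ s)⁻¹))
        + ((fun t => (p + k t) ^ n * (q + k t) ^ m * (p + k t)⁻¹) ⬝ᵥ B⁻¹.mulVec (fun s => b s * ((p + ℓ s) ^ (-n) * (q + ℓ s) ^ (-m)) * ℓ s ^ 2)) * ((fun t => (p + k t) ^ n * (q + k t) ^ m) ⬝ᵥ B⁻¹.mulVec (fun s => b s * ((p + ℓ s) ^ (-n) * (q + ℓ s) ^ (-m)) * (p + ℓ s)⁻¹)) := hstar (fun t => (p + k t) ^ n * (q + k t) ^ m * (p + k t)⁻¹) (fun s => b s * ((p + ℓ s) ^ (-n) * (q + ℓ s) ^ (-m)) * (p + ℓ s)⁻¹)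
  have t2 : (fun t => (k t ^ 3 + α₁ * k t) * ((p + k t) ^ n * (q + k t) ^ m * (p + k t)⁻¹))
        ⬝ᵥ B⁻¹.mulVec (fun s => b s * ((p + ℓ s) ^ (-n) * (q + ℓ s) ^ (-m)) * (q + ℓ s)⁻¹)
      - (fun t => (p + k t) ^ n * (q + k t) ^ m * (p + k t)⁻¹) ⬝ᵥ B⁻¹.mulVec (fun s => (k s ^ 3 + α₁ * k s)
        * (b s * ((p + ℓ s) ^ (-n) * (q + ℓ s) ^ (-m)) * (q + ℓ s)⁻¹))
      = ((fun t => (p + k t) ^ n * (q + k t) ^ m * (p + k t)⁻¹) ⬝ᵥ B⁻¹.mulVec (fun s => b s * ((p + ℓ s) ^ (-n) * (q + ℓ s) ^ (-m)))) * ((fun t => (p + k t) ^ n * (q + k t) ^ m * (k t ^ 2 + α₁)) ⬝ᵥ B⁻¹.mulVec (fun s => b s * ((p + ℓ s) ^ (-n) * (q + ℓ s) ^ (-m)) * (q + ℓ s)⁻¹)) + ((fun t => (p + k t) ^ n * (q + k t) ^ m * (p + k t)⁻¹) ⬝ᵥ B⁻¹.mulVec (fun s => b s * ((p + ℓ s)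 ^ (-n) * (q + ℓ s) ^ (-m)) * ℓ s)) * ((fun t => (p + k t) ^ n * (q + k t) ^ m * k t) ⬝ᵥ B⁻¹.mulVec (fun s => b s * ((p + ℓ s) ^ (-n) * (q + ℓ s) ^ (-m)) * (q + ℓ s)⁻¹))
        + ((fun t => (p + k t) ^ n * (q + k t) ^ m * (p + k t)⁻¹) ⬝ᵥ B⁻¹.mulVec (fun s => b s * ((p + ℓ s) ^ (-n) * (q + ℓ s) ^ (-m)) * ℓ s ^ 2)) * ((fun t => (p + k t) ^ n * (q + k t) ^ m) ⬝ᵥ B⁻¹.mulVec (fun s => b s * ((p + ℓ s) ^ (-n) * (q + ℓ s) ^ (-m)) * (q + ℓ s)⁻¹)) := hstar (fun t => (p + k t) ^ n * (q + k t) ^ m * (p + k t)⁻¹) (fun s => b s * ((p + ℓ s) ^ (-n) * (q + ℓ s) ^ (-m)) * (q + ℓ s)⁻¹)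
  have t3 : (fun t => (k t ^ 3 + α₁ * k t) * ((p + k t) ^ n * (q + k t) ^ m * (q + k t)⁻¹))
        ⬝ᵥ B⁻¹.mulVec (fun s => b s * ((p + ℓ s) ^ (-n) * (q + ℓ s) ^ (-m)) * (p + ℓ s)⁻¹)
      - (fun t => (p + k t) ^ n * (q + k t) ^ m * (q + k t)⁻¹) ⬝ᵥ B⁻¹.mulVec (fun s => (k s ^ 3 + α₁ * k s)
        * (b s * ((p + ℓ s) ^ (-n) * (q + ℓ s) ^ (-m)) * (p + ℓ s)⁻¹))
      = ((fun t => (p + k t) ^ n * (q + k t) ^ m * (q + k t)⁻¹) ⬝ᵥ B⁻¹.mulVec (fun s => b s * ((p + ℓ s) ^ (-n) * (q + ℓ s) ^ (-m)))) * ((fun t => (p + k t) ^ n * (q + k t) ^ m * (k t ^ 2 + α₁)) ⬝ᵥ B⁻¹.mulVec (fun s => b s * ((p + ℓ s) ^ (-n) * (q + ℓ s) ^ (-m)) * (p + ℓ s)⁻¹)) + ((fun t => (p + k t) ^ n * (q + k t) ^ m * (q + k t)⁻¹) ⬝ᵥ B⁻¹.mulVec (fun s => b s * ((p + ℓ s)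 ^ (-n) * (q + ℓ s) ^ (-m)) * ℓ s)) * ((fun t => (p + k t) ^ n * (q + k t) ^ m * k t) ⬝ᵥ B⁻¹.mulVec (fun s => b s * ((p + ℓ s) ^ (-n) * (q + ℓ s) ^ (-m)) * (p + ℓ s)⁻¹))
        + ((fun t => (p + k t) ^ n * (q + k t) ^ m * (q + k t)⁻¹) ⬝ᵥ B⁻¹.mulVec (fun s => b s * ((p + ℓ s) ^ (-n) * (q + ℓ s) ^ (-m)) * ℓ s ^ 2)) * ((fun t => (p + k t) ^ n * (q + k t) ^ m) ⬝ᵥ B⁻¹.mulVec (fun s => b s * ((p + ℓ s) ^ (-n) * (q + ℓ s) ^ (-m)) * (p + ℓ s)⁻¹)) := hstar (fun t => (p + k t) ^ n * (q + k t) ^ m * (q + k t)⁻¹) (fun s => b s * ((p + ℓ s) ^ (-n) * (q + ℓ s) ^ (-m)) * (p + ℓ s)⁻¹)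
  have t4 : (fun t => (k t ^ 3 + α₁ * k t) * ((p + k t) ^ n * (q + k t) ^ m * (q + k t)⁻¹))
        ⬝ᵥ B⁻¹.mulVec (fun s => b s * ((p + ℓ s) ^ (-n) * (q + ℓ s) ^ (-m)) * (q + ℓ s)⁻¹)
      - (fun t => (p + k t) ^ n * (q + k t) ^ m * (q + k t)⁻¹) ⬝ᵥ B⁻¹.mulVec (fun s => (k s ^ 3 + α₁ * k s)
        * (b s * ((p + ℓ s) ^ (-n) * (q + ℓ s) ^ (-m)) * (q + ℓ s)⁻¹))
      = ((fun t => (p + k t) ^ n * (q + k t) ^ m * (q + k t)⁻¹) ⬝ᵥ B⁻¹.mulVec (fun s => b s * ((p + ℓ s) ^ (-n) * (q + ℓ s) ^ (-m)))) * ((fun t => (p + k t) ^ n * (q + k t) ^ m * (k t ^ 2 + α₁)) ⬝ᵥ B⁻¹.mulVec (fun s => b s * ((p + ℓ s) ^ (-n) * (q + ℓ s) ^ (-m)) * (q + ℓ s)⁻¹)) + ((fun t => (p + k t) ^ n * (q + k t) ^ m * (q + k t)⁻¹) ⬝ᵥ B⁻¹.mulVec (fun s => b s * ((p + ℓ s)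 ^ (-n) * (q + ℓ s) ^ (-m)) * ℓ s)) * ((fun t => (p + k t) ^ n * (q + k t) ^ m * k t) ⬝ᵥ B⁻¹.mulVec (fun s => b s * ((p + ℓ s) ^ (-n) * (q + ℓ s) ^ (-m)) * (q + ℓ s)⁻¹))
        + ((fun t => (p + k t) ^ n * (q + k t) ^ m * (q + k t)⁻¹) ⬝ᵥ B⁻¹.mulVec (fun s => b s * ((p + ℓ s) ^ (-n) * (q + ℓ s) ^ (-m)) * ℓ s ^ 2)) * ((fun t => (p + k t) ^ n * (q + k t) ^ m) ⬝ᵥ B⁻¹.mulVec (fun s => b s * ((p + ℓ s) ^ (-n) * (q + ℓ s) ^ (-m)) * (q + ℓ s)⁻¹)) := hstar (fun t => (p + k t) ^ n * (q + k t) ^ m * (q + k t)⁻¹) (fun s => b s * ((p + ℓ s) ^ (-n) * (q + ℓ s) ^ (-m)) * (q + ℓ s)⁻¹)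
  rw [hrowGP, hcolGP, hrA] at t1
  rw [hrowGP, hcolGQ, hrA] at t2
  rw [hrowGQ, hcolGP, hrA] at t3
  rw [hrowGQ, hcolGQ, hrA] at t4
  simp only [sub_dotProduct, add_dotProduct, smul_dotProduct, smul_eq_mul,
    Matrix.mulVec_add, Matrix.mulVec_sub, Matrix.mulVec_smul, dotProduct_add, dotProduct_sub,
    dotProduct_smul] at t1 t2 t3 t4
  -- partial fraction identities
  have hzPF : (fun s => b s * ((p + ℓ s) ^ (-n) * (q + ℓ s) ^ (-m)) * (p + ℓ s)⁻¹) - (fun s => b s * ((p + ℓ s) ^ (-n) * (q + ℓ s) ^ (-m)) * (q + ℓ s)⁻¹) = (q - p) • (fun s => b s * ((p + ℓ s) ^ (-n) * (q + ℓ s) ^ (-m)) * ((p + ℓ s)⁻¹ * (q + ℓ s)⁻¹)) := by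
    funext s
    simp only [Pi.sub_apply, Pi.smul_apply, smul_eq_mul]
    linear_combination pfz p q (ℓ s) (b s * ((p + ℓ s) ^ (-n) * (q + ℓ s) ^ (-m))) (h3 s) (h4 s)
  have hwPF : (fun t => (p + k t) ^ n * (q + k t) ^ m * (p + k t)⁻¹) - (fun t => (p + k t) ^ n * (q + k t) ^ m * (q + k t)⁻¹) = (q - p) • (fun t => (p + k t) ^ n * (q + k t) ^ m * ((p + k t)⁻¹ * (q + k t)⁻¹)) := by
    funext t
    simp only [Pi.sub_apply, Pi.smul_apply, smul_eq_mul]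
    linear_combination pfz p q (k t) ((p + k t) ^ n * (q + k t) ^ m) (h1 t) (h2 t)
  have hPF1 : (q - p) * ((fun t => (p + k t) ^ n * (q + k t) ^ m) ⬝ᵥ B⁻¹.mulVec (fun s => b s * ((p + ℓ s) ^ (-n) * (q + ℓ s) ^ (-m)) * ((p + ℓ s)⁻¹ * (q + ℓ s)⁻¹))) = ((fun t => (p + k t) ^ n * (q + k t) ^ m) ⬝ᵥ B⁻¹.mulVec (fun s => b s * ((p + ℓ s) ^ (-n) * (q + ℓ s) ^ (-m)) * (p + ℓ s)⁻¹)) - ((fun t => (p + k t) ^ n * (q + k t) ^ m) ⬝ᵥ B⁻¹.mulVec (fun s => b s * ((p + ℓ s) ^ (-n) * (q + ℓ s) ^ (-m)) * (q + ℓ s)⁻¹)) := by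
    rw [← dotProduct_sub, ← Matrix.mulVec_sub, hzPF, Matrix.mulVec_smul, dotProduct_smul,
      smul_eq_mul]
  have hPF2 : (q - p) * ((fun t => (p + k t) ^ n * (q + k t) ^ m * k t) ⬝ᵥ B⁻¹.mulVec (fun s => b s * ((p + ℓ s) ^ (-n) * (q + ℓ s) ^ (-m)) * ((p + ℓ s)⁻¹ * (q + ℓ s)⁻¹))) = ((fun t => (p + k t) ^ n * (q + k t) ^ m * k t) ⬝ᵥ B⁻¹.mulVec (fun s => b s * ((p + ℓ s) ^ (-n) * (q + ℓ s) ^ (-m)) * (p + ℓ s)⁻¹)) - ((fun t => (p + k t) ^ n * (q + k t) ^ m * k t) ⬝ᵥ B⁻¹.mulVec (fun s => b s * ((p + ℓ s) ^ (-n) * (q + ℓ s) ^ (-m)) * (q + ℓ s)⁻¹)) := by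
    rw [← dotProduct_sub, ← Matrix.mulVec_sub, hzPF, Matrix.mulVec_smul, dotProduct_smul,
      smul_eq_mul]
  have hPF3 : (q - p) * ((fun t => (p + k t) ^ n * (q + k t) ^ m * ((p + k t)⁻¹ * (q + k t)⁻¹)) ⬝ᵥ B⁻¹.mulVec (fun s => b s * ((p + ℓ s) ^ (-n) * (q + ℓ s) ^ (-m)))) = ((fun t => (p + k t) ^ n * (q + k t) ^ m * (p + k t)⁻¹) ⬝ᵥ B⁻¹.mulVec (fun s => b s * ((p + ℓ s) ^ (-n) * (q + ℓ s) ^ (-m)))) - ((fun t => (p + k t) ^ n * (q + k t) ^ m * (q + k t)⁻¹) ⬝ᵥ B⁻¹.mulVec (fun s => b s * ((p + ℓ s) ^ (-n) * (q + ℓ s) ^ (-m)))) := by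
    rw [← sub_dotProduct, hwPF, smul_dotProduct, smul_eq_mul]
  have hPF4 : (q - p) * ((fun t => (p + k t) ^ n * (q + k t) ^ m * ((p + k t)⁻¹ * (q + k t)⁻¹)) ⬝ᵥ B⁻¹.mulVec (fun s => b s * ((p + ℓ s) ^ (-n) * (q + ℓ s) ^ (-m)) * ℓ s)) = ((fun t => (p + k t) ^ n * (q + k t) ^ m * (p + k t)⁻¹) ⬝ᵥ B⁻¹.mulVec (fun s => b s * ((p + ℓ s) ^ (-n) * (q + ℓ s) ^ (-m)) * ℓ s)) - ((fun t => (p + k t) ^ n * (q + k t) ^ m * (q + k t)⁻¹) ⬝ᵥ B⁻¹.mulVec (fun s => b s * ((p + ℓ s) ^ (-n) * (q + ℓ s) ^ (-m)) * ℓ s)) := by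
    rw [← sub_dotProduct, hwPF, smul_dotProduct, smul_eq_mul]
  -- finish
  rw [hD11, hD10, hD01, hDm10, hD0m1, hDmm, hDm11, hD1m1]
  linear_combination (B.det ^ 3) * key_algebra p q α₁
    ((fun t => (p + k t) ^ n * (q + k t) ^ m) ⬝ᵥ B⁻¹.mulVec (fun s => b s * ((p + ℓ s) ^ (-n) * (q + ℓ s) ^ (-m)) * (p + ℓ s)⁻¹)) ((fun t => (p + k t) ^ n * (q + k t) ^ m * (p + k t)⁻¹) ⬝ᵥ B⁻¹.mulVec (fun s => b s * ((p + ℓ s) ^ (-n) * (q + ℓ s) ^ (-m)))) ((fun t => (p + k t) ^ n * (q + k t) ^ m) ⬝ᵥ B⁻¹.mulVec (fun s => b s * ((p + ℓ s) ^ (-n) * (q + ℓ s) ^ (-m)) * (q + ℓ s)⁻¹)) ((fun t => (p + k t) ^ n * (q + k t) ^ m * (q + k t)⁻¹) ⬝ᵥ B⁻¹.mulVec (fun s => b s * ((p + ℓ s) ^ (-n) * (q + ℓ s) ^ (-m))))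
    ((fun t => (p + k t) ^ n * (q + k t) ^ m * (p + k t)⁻¹) ⬝ᵥ B⁻¹.mulVec (fun s => b s * ((p + ℓ s) ^ (-n) * (q + ℓ s) ^ (-m)) * (q + ℓ s)⁻¹)) ((fun t => (p + k t) ^ n * (q + k t) ^ m * (q + k t)⁻¹) ⬝ᵥ B⁻¹.mulVec (fun s => b s * ((p + ℓ s) ^ (-n) * (q + ℓ s) ^ (-m)) * (p + ℓ s)⁻¹)) ((fun t => (p + k t) ^ n * (q + k t) ^ m * k t) ⬝ᵥ B⁻¹.mulVec (fun s => b s * ((p + ℓ s) ^ (-n) * (q + ℓ s) ^ (-m)) * (p + ℓ s)⁻¹)) ((fun t => (p + k t) ^ n * (q + k t) ^ m * k t) ⬝ᵥ B⁻¹.mulVec (fun s => b s * ((p + ℓ s) ^ (-n) * (q + ℓ s) ^ (-m)) * (q + ℓ s)⁻¹))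
    ((fun t => (p + k t) ^ n * (q + k t) ^ m * (p + k t)⁻¹) ⬝ᵥ B⁻¹.mulVec (fun s => b s * ((p + ℓ s) ^ (-n) * (q + ℓ s) ^ (-m)) * ℓ s)) ((fun t => (p + k t) ^ n * (q + k t) ^ m * (q + k t)⁻¹) ⬝ᵥ B⁻¹.mulVec (fun s => b s * ((p + ℓ s) ^ (-n) * (q + ℓ s) ^ (-m)) * ℓ s)) ((fun t => (p + k t) ^ n * (q + k t) ^ m * k t ^ 2) ⬝ᵥ B⁻¹.mulVec (fun s => b s * ((p + ℓ s) ^ (-n) * (q + ℓ s) ^ (-m)) * (p + ℓ s)⁻¹)) ((fun t => (p + k t) ^ n * (q + k t) ^ m * k t ^ 2) ⬝ᵥ B⁻¹.mulVec (fun s => b s * ((p + ℓ s) ^ (-n) * (q + ℓ s) ^ (-m)) * (q + ℓ s)⁻¹))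
    ((fun t => (p + k t) ^ n * (q + k t) ^ m * (p + k t)⁻¹) ⬝ᵥ B⁻¹.mulVec (fun s => b s * ((p + ℓ s) ^ (-n) * (q + ℓ s) ^ (-m)) * ℓ s ^ 2)) ((fun t => (p + k t) ^ n * (q + k t) ^ m * (q + k t)⁻¹) ⬝ᵥ B⁻¹.mulVec (fun s => b s * ((p + ℓ s) ^ (-n) * (q + ℓ s) ^ (-m)) * ℓ s ^ 2)) ((fun t => (p + k t) ^ n * (q + k t) ^ m * (p + k t)⁻¹) ⬝ᵥ B⁻¹.mulVec (fun s => b s * ((p + ℓ s) ^ (-n) * (q + ℓ s) ^ (-m)) * (p + ℓ s)⁻¹)) ((fun t => (p + k t) ^ n * (q + k t) ^ m * (q + k t)⁻¹) ⬝ᵥ B⁻¹.mulVec (fun s => b s * ((p + ℓ s) ^ (-n) * (q + ℓ s) ^ (-m)) * (q + ℓ s)⁻¹))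
    ((fun t => (p + k t) ^ n * (q + k t) ^ m) ⬝ᵥ B⁻¹.mulVec (fun s => b s * ((p + ℓ s) ^ (-n) * (q + ℓ s) ^ (-m)) * ((p + ℓ s)⁻¹ * (q + ℓ s)⁻¹))) ((fun t => (p + k t) ^ n * (q + k t) ^ m * k t) ⬝ᵥ B⁻¹.mulVec (fun s => b s * ((p + ℓ s) ^ (-n) * (q + ℓ s) ^ (-m)) * ((p + ℓ s)⁻¹ * (q + ℓ s)⁻¹))) ((fun t => (p + k t) ^ n * (q + k t) ^ m * ((p + k t)⁻¹ * (q + k t)⁻¹)) ⬝ᵥ B⁻¹.mulVec (fun s => b s * ((p + ℓ s) ^ (-n) * (q + ℓ s) ^ (-m)))) ((fun t => (p + k t) ^ n * (q + k t) ^ m * ((p + k t)⁻¹ * (q + k t)⁻¹)) ⬝ᵥ B⁻¹.mulVec (fun s => b s * ((p + ℓ s) ^ (-n) * (q + ℓ s) ^ (-m)) * ℓ s))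
    (by linear_combination t1) (by linear_combination t2)
    (by linear_combination t3) (by linear_combination t4)
    hPF1 hPF2 hPF3 hPF4

/-- The soliton τ-function built on the cubic curve
`ℓ³ + α₁ℓ = k³ + α₁k` satisfies the extended trilinear discrete Boussinesq equation. -/
theorem extended_trilinear_bsq_soliton_solution
    (N : ℕ) (hN : 1 ≤ N) (α₁ : ℂ) (a k ℓ : Fin N → ℂ)
    (hcurve : ∀ s, (ℓ s) ^ 3 + α₁ * ℓ s = (k s) ^ 3 + α₁ * k s)
    (p q : ℂ)
    (h1 : ∀ t, p + k t ≠ 0) (h2 : ∀ t, q + k t ≠ 0)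
    (h3 : ∀ s, p + ℓ s ≠ 0) (h4 : ∀ s, q + ℓ s ≠ 0)
    (h5 : ∀ s t, k t - ℓ s ≠ 0)
    (M : ℤ → ℤ → Matrix (Fin N) (Fin N) ℂ)
    (hM : ∀ (n m : ℤ) (s t : Fin N), M n m s t =
      (p + k t) ^ n * (q + k t) ^ m * (p + ℓ s) ^ (-n) * (q + ℓ s) ^ (-m) / (k t - ℓ s))
    (τ : ℤ → ℤ → ℂ)
    (hτ : ∀ n m : ℤ, τ n m = Matrix.det (1 + Matrix.diagonal a * M n m)) :
    ∀ n m : ℤ,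
      (p - q) ^ 2 * τ (n + 1) (m + 1) * τ n m * τ (n - 1) (m - 1) -
      (3 * q ^ 2 + α₁) * τ (n + 1) m * τ n m * τ (n - 1) m -
      (3 * p ^ 2 + α₁) * τ n (m + 1) * τ n m * τ n (m - 1) +
      (p ^ 2 + p * q + q ^ 2 + α₁) *
        (τ (n - 1) (m + 1) * τ (n + 1) m * τ n (m - 1) +
         τ (n + 1) (m - 1) * τ n (m + 1) * τ (n - 1) m) = 0 := by
  intro n m
  classical
  set τp : ℤ → ℤ → Polynomial ℂ := fun n' m' =>
    (1 + Matrix.diagonal (fun s => Polynomial.C (a s) * Polynomial.X)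
      * (M n' m').map Polynomial.C).det with hτp
  have heval : ∀ (ε : ℂ) (n' m' : ℤ), (τp n' m').eval ε
      = (1 + Matrix.diagonal (fun s => a s * ε) * M n' m').det := by
    intro ε n' m'
    have h0 : (τp n' m').eval ε = (Polynomial.evalRingHom ε)
        ((1 + Matrix.diagonal (fun s => Polynomial.C (a s) * Polynomial.X)
          * (M n' m').map Polynomial.C).det) := rfl
    rw [h0, RingHom.map_det]
    have hd : (Polynomial.evalRingHom ε).mapMatrix
        (Matrix.diagonal (fun s => Polynomial.C (a s) * Polynomial.X))
        = Matrix.diagonal (fun s => a s * ε) := by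
      ext i j
      by_cases hij : i = j
      · subst hij
        simp [RingHom.mapMatrix_apply, Matrix.map_apply]
      · simp [RingHom.mapMatrix_apply, Matrix.map_apply, Matrix.diagonal_apply_ne _ hij]
    have hm : (Polynomial.evalRingHom ε).mapMatrix ((M n' m').map Polynomial.C) = M n' m' := by
      ext i j
      simp [RingHom.mapMatrix_apply, Matrix.map_apply]
    rw [_root_.map_add, _root_.map_mul, _root_.map_one, hd, hm]
  set Ep : Polynomial ℂ :=
    Polynomial.C ((p - q) ^ 2) * τp (n + 1) (m + 1) * τp n m * τp (n - 1) (m - 1)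
    - Polynomial.C (3 * q ^ 2 + α₁) * τp (n + 1) m * τp n m * τp (n - 1) m
    - Polynomial.C (3 * p ^ 2 + α₁) * τp n (m + 1) * τp n m * τp n (m - 1)
    + Polynomial.C (p ^ 2 + p * q + q ^ 2 + α₁) *
        (τp (n - 1) (m + 1) * τp (n + 1) m * τp n (m - 1)
          + τp (n + 1) (m - 1) * τp n (m + 1) * τp (n - 1) m) with hEp
  have hEval : ∀ ε : ℂ, Ep.eval ε * (τp n m).eval ε = 0 := by
    intro ε
    by_cases hz : (τp n m).eval ε = 0
    · rw [hz, mul_zero]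
    · have hU : IsUnit (1 + Matrix.diagonal (fun s => a s * ε) * M n m).det := by
        rw [← heval ε n m]; exact isUnit_iff_ne_zero.mpr hz
      have hmain := main_identity N α₁ k ℓ hcurve p q h1 h2 h3 h4 h5 M hM n m (fun s => a s * ε) hU
      have hEz : Ep.eval ε = 0 := by
        rw [hEp]
        simp only [Polynomial.eval_add, Polynomial.eval_sub, Polynomial.eval_mul,
          Polynomial.eval_C, heval]
        linear_combination hmain
      rw [hEz, zero_mul]
  have hE0 : Ep * τp n m = 0 :=
    Polynomial.funext fun x => by
      rw [Polynomial.eval_mul, Polynomial.eval_zero]; exact hEval x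
  have hτnz : τp n m ≠ 0 := by
    intro h0
    have h1' := heval 0 n m
    rw [h0, Polynomial.eval_zero] at h1'
    have h2' : (fun s => a s * (0 : ℂ)) = fun _ => (0 : ℂ) := by
      funext s; ring
    rw [h2', Matrix.diagonal_zero, Matrix.zero_mul, add_zero, Matrix.det_one] at h1'
    exact zero_ne_one h1'
  have hEp0 : Ep = 0 := by
    rcases mul_eq_zero.mp hE0 with h | h
    · exact h
    · exact absurd h hτnz
  have hfin := congrArg (Polynomial.eval 1) hEp0
  rw [hEp] at hfin
  simp only [Polynomial.eval_add, Polynomial.eval_sub, Polynomial.eval_mul,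
    Polynomial.eval_C, Polynomial.eval_zero, heval] at hfin
  have hb : (fun s => a s * (1 : ℂ)) = a := by funext s; exact mul_one (a s)
  rw [hb] at hfin
  rw [hτ (n + 1) (m + 1), hτ n m, hτ (n - 1) (m - 1), hτ (n + 1) m, hτ (n - 1) m,
    hτ n (m + 1), hτ n (m - 1), hτ (n - 1) (m + 1), hτ (n + 1) (m - 1)]
  linear_combination hfin
end

section
/- Let N ≥ 2, p, q ∈ ℂ and v : {1,…,N−1} → ℂ. Let τ : ℤ × ℤ × ℤ^{N−1} → ℂ, write T_p, T_q for the forward unit shifts in the first two directions and S_i for the forward unit shift in the i-th auxiliary direction, and define σ_0 = τ and σ_i = S_i σ_{i−1} for i = 1,…,N−1. Assume that (i) for each i = 1,…,N−1 the Hirota–Miwa equation with parameters (p, q, −v_i) holds in the directions (T_p, T_q, S_i) at every lattice point, i.e. (p−q)(S_i τ)(T_p T_q τ) + (q+v_i)(T_p τ)(T_q S_i τ) − (v_i+p)(T_q τ)(T_p S_i τ) = 0, and (ii) the symmetry constraint T_p S_1 S_2 ⋯ S_{N−1} τ = τ holds. Then σ_{N−1} = T_p^{−1} τ, and for each i = 1,…,N−1: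 (p−q) σ_i (T_p T_q σ_{i−1}) + (q+v_i)(T_p σ_{i−1})(T_q σ_i) − (v_i+p)(T_q σ_{i−1})(T_p σ_i) = 0 at every lattice point. -/
/-- The lattice `ℤ × ℤ × ℤ^d`: two principal directions with parameters `p, q`, and `d`
auxiliary directions. -/
abbrev KPLat (d : ℕ) := ℤ × ℤ × (Fin d → ℤ)

/-- Forward unit shift in the first (p-)direction. -/
def shiftP {d : ℕ} (f : KPLat d → ℂ) : KPLat d → ℂ :=
  fun x => f (x.1 + 1, x.2.1, x.2.2)

/-- Forward unit shift in the second (q-)direction. -/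
def shiftQ {d : ℕ} (f : KPLat d → ℂ) : KPLat d → ℂ :=
  fun x => f (x.1, x.2.1 + 1, x.2.2)

/-- Forward unit shift in the `i`-th auxiliary direction. -/
def shiftS {d : ℕ} (i : Fin d) (f : KPLat d → ℂ) : KPLat d → ℂ :=
  fun x => f (x.1, x.2.1, fun j => x.2.2 j + if j = i then 1 else 0)

/-- Backward unit shift in the first (p-)direction, i.e. `T_p⁻¹`. -/
def shiftPInv {d : ℕ} (f : KPLat d → ℂ) : KPLat d → ℂ :=
  fun x => f (x.1 - 1, x.2.1, x.2.2)

/-- the unified N-reduction of the discrete AKP (Hirota–Miwa) equation.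
Here `v i` (for `i : Fin (N-1)`) plays the role of the root `ω_{i+1}(−p)`, the `i`-th
auxiliary direction carries the lattice parameter `−v i`, and
`σ 0 = τ, σ (i+1) = S_i (σ i)`. Assuming the Hirota–Miwa equation with parameters
`(p, q, −v i)` in the directions `(T_p, T_q, S_i)` at every lattice point, together with
the symmetry constraint `T_p S_1 ⋯ S_{N−1} τ = τ`, we get `σ (N−1) = T_p⁻¹ τ` and the
coupled system of `N−1` two-dimensional lattice equations. -/
theorem akp_n_reduction_coupled_system
    (N : ℕ) (hN : 2 ≤ N) (p q : ℂ) (v : Fin (N - 1) → ℂ)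
    (τ : KPLat (N - 1) → ℂ) (σ : ℕ → KPLat (N - 1) → ℂ)
    (hσ0 : σ 0 = τ)
    (hσ : ∀ i : Fin (N - 1), σ ((i : ℕ) + 1) = shiftS i (σ (i : ℕ)))
    (hHM : ∀ i : Fin (N - 1), ∀ x : KPLat (N - 1),
      (p - q) * shiftS i τ x * shiftP (shiftQ τ) x
        + (q + v i) * shiftP τ x * shiftQ (shiftS i τ) x
        - (v i + p) * shiftQ τ x * shiftP (shiftS i τ) x = 0)
    (hsym : ∀ x : KPLat (N - 1), τ (x.1 + 1, x.2.1, fun j => x.2.2 j + 1) = τ x) :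
    σ (N - 1) = shiftPInv τ ∧
    ∀ i : Fin (N - 1), ∀ x : KPLat (N - 1),
      (p - q) * σ ((i : ℕ) + 1) x * shiftP (shiftQ (σ (i : ℕ))) x
        + (q + v i) * shiftP (σ (i : ℕ)) x * shiftQ (σ ((i : ℕ) + 1)) x
        - (v i + p) * shiftQ (σ (i : ℕ)) x * shiftP (σ ((i : ℕ) + 1)) x = 0 := by

  -- closed form for σ i
  have key : ∀ i : ℕ, i ≤ N - 1 → ∀ x : KPLat (N - 1),
      σ i x = τ (x.1, x.2.1, fun j => x.2.2 j + if (j : ℕ) < i then 1 else 0) := by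
    intro i
    induction i with
    | zero =>
        intro _ x
        simp [hσ0]
    | succ i ih =>
        intro h x
        have hi : i < N - 1 := h
        have hih := ih (Nat.le_of_lt hi)
        have hcoe : ((⟨i, hi⟩ : Fin (N - 1)) : ℕ) = i := rfl
        have := hσ ⟨i, hi⟩
        rw [hcoe] at this
        rw [this]
        show σ i (x.1, x.2.1, fun j => x.2.2 j + if j = (⟨i, hi⟩ : Fin (N-1)) then 1 else 0) = _
        rw [hih]
        refine congrArg τ (Prod.ext rfl (Prod.ext rfl (funext fun j => ?_)))
        rcases lt_trichotomy (j : ℕ) i with hlt | heq | hgt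
        · have hne : j ≠ (⟨i, hi⟩ : Fin (N-1)) := by
            intro hj; rw [hj] at hlt; simp at hlt
          simp [hne, hlt, Nat.lt_succ_of_lt hlt]
        · have hje : j = (⟨i, hi⟩ : Fin (N-1)) := Fin.ext heq
          simp [hje, heq, Nat.lt_succ_iff]
        · have hne : j ≠ (⟨i, hi⟩ : Fin (N-1)) := by
            intro hj; rw [hj] at hgt; simp at hgt
          have h1 : ¬ (j : ℕ) < i := Nat.lt_asymm hgt
          have h2 : ¬ (j : ℕ) < i + 1 := by omega
          simp [hne, h1, h2]
  constructor
  · funext x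
    rw [key (N - 1) le_rfl x]
    have hall : (fun j : Fin (N-1) => x.2.2 j + if (j : ℕ) < N - 1 then 1 else 0)
        = fun j => x.2.2 j + 1 := by
      funext j; simp [j.isLt]
    rw [hall]
    have := hsym (x.1 - 1, x.2.1, x.2.2)
    simp only [sub_add_cancel] at this
    exact this
  · intro i x
    set y : KPLat (N - 1) := (x.1, x.2.1, fun j => x.2.2 j + if (j : ℕ) < (i : ℕ) then 1 else 0) with hy
    have hHMy := hHM i y
    have hle : (i : ℕ) ≤ N - 1 := Nat.le_of_lt i.isLt
    have hle1 : (i : ℕ) + 1 ≤ N - 1 := i.isLt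
    have e1 : σ ((i : ℕ) + 1) x = shiftS i τ y := by
      rw [key _ hle1 x]
      simp only [shiftS, hy]
      refine congrArg τ (Prod.ext rfl (Prod.ext rfl (funext fun j => ?_)))
      rcases lt_trichotomy (j : ℕ) (i : ℕ) with hlt | heq | hgt
      · have hne : j ≠ i := by intro hj; rw [hj] at hlt; simp at hlt
        simp [hne, hlt, Nat.lt_succ_of_lt hlt]
      · have hje : j = i := Fin.ext heq
        simp [hje, heq, Nat.lt_succ_iff]
      · have hne : j ≠ i := by intro hj; rw [hj] at hgt; simp at hgt
        have h1 : ¬ (j : ℕ) < (i : ℕ) := Nat.lt_asymm hgt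
        have h2 : ¬ (j : ℕ) < (i : ℕ) + 1 := by omega
        simp [hne, h1, h2]
    have e2 : shiftP (shiftQ (σ (i : ℕ))) x = shiftP (shiftQ τ) y := by
      simp only [shiftP, shiftQ]
      rw [key _ hle]
    have e3 : shiftP (σ (i : ℕ)) x = shiftP τ y := by
      simp only [shiftP]; rw [key _ hle]
    have e4 : shiftQ (σ ((i : ℕ) + 1)) x = shiftQ (shiftS i τ) y := by
      simp only [shiftQ]
      have := e1
      have e1' : ∀ z : KPLat (N-1), σ ((i : ℕ) + 1) z = shiftS i τ (z.1, z.2.1, fun j => z.2.2 j + if (j : ℕ) < (i : ℕ) then 1 else 0) := by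
        intro z
        rw [key _ hle1 z]
        simp only [shiftS]
        refine congrArg τ (Prod.ext rfl (Prod.ext rfl (funext fun j => ?_)))
        rcases lt_trichotomy (j : ℕ) (i : ℕ) with hlt | heq | hgt
        · have hne : j ≠ i := by intro hj; rw [hj] at hlt; simp at hlt
          simp [hne, hlt, Nat.lt_succ_of_lt hlt]
        · have hje : j = i := Fin.ext heq
          simp [hje, heq, Nat.lt_succ_iff]
        · have hne : j ≠ i := by intro hj; rw [hj] at hgt; simp at hgt
          have h1 : ¬ (j : ℕ) < (i : ℕ) := Nat.lt_asymm hgt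
          have h2 : ¬ (j : ℕ) < (i : ℕ) + 1 := by omega
          simp [hne, h1, h2]
      exact e1' (x.1, x.2.1 + 1, x.2.2)
    have e5 : shiftQ (σ (i : ℕ)) x = shiftQ τ y := by
      simp only [shiftQ]; rw [key _ hle]
    have e6 : shiftP (σ ((i : ℕ) + 1)) x = shiftP (shiftS i τ) y := by
      simp only [shiftP]
      have e1' : ∀ z : KPLat (N-1), σ ((i : ℕ) + 1) z = shiftS i τ (z.1, z.2.1, fun j => z.2.2 j + if (j : ℕ) < (i : ℕ) then 1 else 0) := by
        intro z
        rw [key _ hle1 z]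
        simp only [shiftS]
        refine congrArg τ (Prod.ext rfl (Prod.ext rfl (funext fun j => ?_)))
        rcases lt_trichotomy (j : ℕ) (i : ℕ) with hlt | heq | hgt
        · have hne : j ≠ i := by intro hj; rw [hj] at hlt; simp at hlt
          simp [hne, hlt, Nat.lt_succ_of_lt hlt]
        · have hje : j = i := Fin.ext heq
          simp [hje, heq, Nat.lt_succ_iff]
        · have hne : j ≠ i := by intro hj; rw [hj] at hgt; simp at hgt
          have h1 : ¬ (j : ℕ) < (i : ℕ) := Nat.lt_asymm hgt
          have h2 : ¬ (j : ℕ) < (i : ℕ) + 1 := by omega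
          simp [hne, h1, h2]
      exact e1' (x.1 + 1, x.2.1, x.2.2)
    rw [e1, e2, e3, e4, e5, e6]
    exact hHMy
end

section
/- Let N ≥ 2, p, q ∈ ℂ and v : {1,…,N−1} → ℂ. Let τ : ℤ × ℤ × ℤ^{N−1} → ℂ, write T_p, T_q for the forward unit shifts in the first two directions and S_i for the forward unit shift in the i-th auxiliary direction, and define σ_0 = τ and σ_i = S_i σ_{i−1} for i = 1,…,N−1. Assume that (i) for each i = 1,…,N−1 the Miwa (discrete BKP) equation with parameters (p, q, r = −v_i) holds in the directions (T_p, T_q, S_i) at every lattice point, i.e. (p−q)(q+v_i)(−v_i−p) τ (T_p T_q S_i τ) + (p+q)(p−v_i)(q+v_i)(T_p τ)(T_q S_i τ) + (−v_i+p)(−v_i+q)(p−q)(S_i τ)(T_p T_q τ) + (q−v_i)(q+p)(−v_i−p)(T_q τ)(T_p S_i τ) = 0, and (ii) the symmetry constraint T_p S_1 S_2 ⋯ S_{N−1} τ = τ holds. Then σ_{N−1} = T_p^{−1} τ, and for each i = 1,…,N−1: (p−q)(q+v_i)(v_i+p) σ_{i−1} (T_p T_q σ_i) − (p+q)(p−v_i)(q+v_i)(T_p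 σ_{i−1})(T_q σ_i) − (v_i−p)(v_i−q)(p−q) σ_i (T_p T_q σ_{i−1}) + (q−v_i)(q+p)(v_i+p)(T_q σ_{i−1})(T_p σ_i) = 0 at every lattice point. -/
/-- the unified N-reduction of the discrete BKP (Miwa) equation.
Here `v i` (for `i : Fin (N-1)`) plays the role of the root `ω_{i+1}(−p)`, the `i`-th
auxiliary direction carries the lattice parameter `−v i`, and
`σ 0 = τ, σ (i+1) = S_i (σ i)`. Assuming the Miwa equation with parameters
`(p, q, r = −v i)` in the directions `(T_p, T_q, S_i)` at every lattice point, together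
with the symmetry constraint `T_p S_1 ⋯ S_{N−1} τ = τ`, we get `σ (N−1) = T_p⁻¹ τ` and the
coupled system of `N−1` two-dimensional lattice equations (the extended discrete
Sawada–Kotera equation for `N = 3`). -/
theorem bkp_n_reduction_coupled_system
    (N : ℕ) (hN : 2 ≤ N) (p q : ℂ) (v : Fin (N - 1) → ℂ)
    (τ : KPLat (N - 1) → ℂ) (σ : ℕ → KPLat (N - 1) → ℂ)
    (hσ0 : σ 0 = τ)
    (hσ : ∀ i : Fin (N - 1), σ ((i : ℕ) + 1) = shiftS i (σ (i : ℕ)))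
    (hBKP : ∀ i : Fin (N - 1), ∀ x : KPLat (N - 1),
      (p - q) * (q + v i) * (-v i - p) * τ x * shiftP (shiftQ (shiftS i τ)) x
        + (p + q) * (p - v i) * (q + v i) * shiftP τ x * shiftQ (shiftS i τ) x
        + (-v i + p) * (-v i + q) * (p - q) * shiftS i τ x * shiftP (shiftQ τ) x
        + (q - v i) * (q + p) * (-v i - p) * shiftQ τ x * shiftP (shiftS i τ) x = 0)
    (hsym : ∀ x : KPLat (N - 1), τ (x.1 + 1, x.2.1, fun j => x.2.2 j + 1) = τ x) :
    σ (N - 1) = shiftPInv τ ∧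
    ∀ i : Fin (N - 1), ∀ x : KPLat (N - 1),
      (p - q) * (q + v i) * (v i + p) * σ (i : ℕ) x
          * shiftP (shiftQ (σ ((i : ℕ) + 1))) x
        - (p + q) * (p - v i) * (q + v i) * shiftP (σ (i : ℕ)) x
          * shiftQ (σ ((i : ℕ) + 1)) x
        - (v i - p) * (v i - q) * (p - q) * σ ((i : ℕ) + 1) x
          * shiftP (shiftQ (σ (i : ℕ))) x
        + (q - v i) * (q + p) * (v i + p) * shiftQ (σ (i : ℕ)) x
          * shiftP (σ ((i : ℕ) + 1)) x = 0 := by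
  -- explicit formula for σ k
  have key : ∀ k, k ≤ N - 1 → ∀ x : KPLat (N - 1),
      σ k x = τ (x.1, x.2.1, fun j => x.2.2 j + if (j : ℕ) < k then 1 else 0) := by
    intro k
    induction k with
    | zero =>
      intro _ x
      simp [hσ0]
    | succ k ih =>
      intro hk x
      have hkd : k < N - 1 := hk
      have hrw := congrFun (hσ ⟨k, hkd⟩) x
      simp only [Fin.val_mk] at hrw
      rw [hrw]
      simp only [shiftS]
      rw [ih (le_of_lt hkd)]
      congr 1
      refine Prod.ext rfl (Prod.ext rfl ?_)
      funext j
      simp only [Fin.ext_iff, Fin.val_mk]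
      by_cases h1 : (j : ℕ) = k
      · simp [h1]
      · by_cases h2 : (j : ℕ) < k
        · simp [h1, h2, Nat.lt_succ_of_lt h2]
        · have h3 : ¬ (j : ℕ) < k + 1 := by omega
          simp [h1, h2, h3]
  constructor
  · funext x
    have h1 := key (N - 1) le_rfl x
    have h2 : (fun j : Fin (N-1) => x.2.2 j + if (j : ℕ) < N - 1 then 1 else 0)
        = fun j => x.2.2 j + 1 := by
      funext j
      simp [j.isLt]
    rw [h1, h2]
    have h3 := hsym (x.1 - 1, x.2.1, x.2.2)
    simp only [sub_add_cancel] at h3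
    exact h3
  · intro i x
    set y : KPLat (N - 1) :=
      (x.1, x.2.1, fun j => x.2.2 j + if (j : ℕ) < (i : ℕ) then 1 else 0) with hy
    have hiN : (i : ℕ) + 1 ≤ N - 1 := i.isLt
    have hfun : ∀ z : Fin (N-1) → ℤ,
        (fun j : Fin (N-1) => z j + if (j : ℕ) < (i : ℕ) + 1 then 1 else 0)
        = fun j => (z j + if (j : ℕ) < (i : ℕ) then 1 else 0) + if j = i then 1 else 0 := by
      intro z
      funext j
      simp only [Fin.ext_iff]
      by_cases h1 : (j : ℕ) = (i : ℕ)
      · simp [h1]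
      · by_cases h2 : (j : ℕ) < (i : ℕ)
        · simp [h1, h2, Nat.lt_succ_of_lt h2]
        · have h3 : ¬ (j : ℕ) < (i : ℕ) + 1 := by omega
          simp [h1, h2, h3]
    have e1 : σ (i : ℕ) x = τ y := key i i.isLt.le x
    have e2 : shiftP (σ (i : ℕ)) x = shiftP τ y := by
      simp only [shiftP, hy]
      exact key i i.isLt.le _
    have e3 : shiftQ (σ (i : ℕ)) x = shiftQ τ y := by
      simp only [shiftQ, hy]
      exact key i i.isLt.le _
    have e4 : shiftP (shiftQ (σ (i : ℕ))) x = shiftP (shiftQ τ) y := by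
      simp only [shiftP, shiftQ, hy]
      exact key i i.isLt.le _
    have e5 : σ ((i : ℕ) + 1) x = shiftS i τ y := by
      rw [key _ hiN x]
      simp only [shiftS, hy]
      rw [hfun x.2.2]
    have e6 : shiftP (σ ((i : ℕ) + 1)) x = shiftP (shiftS i τ) y := by
      simp only [shiftP, shiftS, hy]
      rw [key _ hiN]
      rw [hfun]
    have e7 : shiftQ (σ ((i : ℕ) + 1)) x = shiftQ (shiftS i τ) y := by
      simp only [shiftQ, shiftS, hy]
      rw [key _ hiN]
      rw [hfun]
    have e8 : shiftP (shiftQ (σ ((i : ℕ) + 1))) x = shiftP (shiftQ (shiftS i τ)) y := by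
      simp only [shiftP, shiftQ, shiftS, hy]
      rw [key _ hiN]
      rw [hfun]
    rw [e1, e2, e3, e4, e5, e6, e7, e8]
    have E := hBKP i y
    linear_combination (-1 : ℂ) * E
end

section
/- Let N ≥ 2, p, q ∈ ℂ and v : {1,…,N−1} → ℂ. Let τ : ℤ × ℤ × ℤ^{N−1} → ℂ, write T_p, T_q for the forward unit shifts in the first two directions and S_i for the forward unit shift in the i-th auxiliary direction, and define σ_0 = τ and σ_i = S_i σ_{i−1} for i = 1,…,N−1. Assume that (i) for each i = 1,…,N−1 the discrete CKP (Kashaev) equation with parameters (p, q, r = −v_i) holds in the directions (T_p, T_q, S_i) at every lattice point, i.e. [(p−q)²(q−r)²(r−p)² τ (T_pT_qS_i τ) + (p+q)²(p+r)²(q−r)² (T_p τ)(T_qS_i τ) − (q+r)²(q+p)²(r−p)² (T_q τ)(T_pS_i τ) − (r+p)²(r+q)²(p−q)² (S_i τ)(T_pT_q τ)]² − 4(p²−q²)²(p²−r²)² [(q+r)²(T_pT_q τ)(T_pS_i τ) − (q−r)²(T_p τ)(T_pT_qS_i τ)][(q+r)²(T_q τ)(S_i τ) − (q−r)² τ (T_qS_i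 τ)] = 0 with r = −v_i, and (ii) the symmetry constraint T_p S_1 S_2 ⋯ S_{N−1} τ = τ holds. Then σ_{N−1} = T_p^{−1} τ, and for each i = 1,…,N−1: [(p−q)²(q+v_i)²(v_i+p)² σ_{i−1}(T_pT_q σ_i) + (p+q)²(p−v_i)²(q+v_i)² (T_p σ_{i−1})(T_q σ_i) − (q−v_i)²(q+p)²(v_i+p)² (T_q σ_{i−1})(T_p σ_i) − (v_i−p)²(v_i−q)²(p−q)² σ_i (T_pT_q σ_{i−1})]² − 4(p²−q²)²(p²−v_i²)² [(q−v_i)²(T_pT_q σ_{i−1})(T_p σ_i) − (q+v_i)²(T_p σ_{i−1})(T_pT_q σ_i)][(q−v_i)²(T_q σ_{i−1}) σ_i − (q+v_i)² σ_{i−1}(T_q σ_i)] = 0 at every lattice point. -/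
lemma sigma_eq {d : ℕ} (τ : KPLat d → ℂ) (σ : ℕ → KPLat d → ℂ)
    (hσ0 : σ 0 = τ) (hσ : ∀ i : Fin d, σ ((i : ℕ) + 1) = shiftS i (σ (i : ℕ))) :
    ∀ k : ℕ, k ≤ d → ∀ x : KPLat d,
      σ k x = τ (x.1, x.2.1, fun j => x.2.2 j + if (j : ℕ) < k then 1 else 0) := by
  intro k
  induction k with
  | zero =>
    intro _ x
    rw [hσ0]
    congr 1
    simp
  | succ k ih =>
    intro hk x
    have hkd : k < d := hk
    rw [show σ (k + 1) = shiftS ⟨k, hkd⟩ (σ k) from hσ ⟨k, hkd⟩]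
    simp only [shiftS]
    rw [ih (le_of_lt hkd)]
    congr 1
    refine Prod.ext rfl (Prod.ext rfl ?_)
    funext j
    simp only [Fin.ext_iff]
    by_cases h : (j : ℕ) = k
    · simp [h]
    · by_cases h2 : (j : ℕ) < k
      · simp [h, h2, Nat.lt_succ_of_lt h2]
      · have : ¬ (j : ℕ) < k + 1 := by omega
        simp [h, h2, this]

/-- the unified N-reduction of the discrete CKP (Kashaev) equation.
Here `v i` (for `i : Fin (N-1)`) plays the role of the root `ω_{i+1}(−p)`, the `i`-th
auxiliary direction carries the lattice parameter `−v i`, and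
`σ 0 = τ, σ (i+1) = S_i (σ i)`. Assuming the discrete CKP equation with parameters
`(p, q, r = −v i)` in the directions `(T_p, T_q, S_i)` at every lattice point, together
with the symmetry constraint `T_p S_1 ⋯ S_{N−1} τ = τ`, we get `σ (N−1) = T_p⁻¹ τ` and the
coupled system of `N−1` two-dimensional quadrilinear lattice equations (the extended
discrete Kaup–Kupershmidt equation for `N = 3`, Hirota–Satsuma for `N = 4`). -/
theorem ckp_n_reduction_coupled_system
    (N : ℕ) (hN : 2 ≤ N) (p q : ℂ) (v : Fin (N - 1) → ℂ)
    (τ : KPLat (N - 1) → ℂ) (σ : ℕ → KPLat (N - 1) → ℂ)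
    (hσ0 : σ 0 = τ)
    (hσ : ∀ i : Fin (N - 1), σ ((i : ℕ) + 1) = shiftS i (σ (i : ℕ)))
    (hCKP : ∀ i : Fin (N - 1), ∀ r : ℂ, r = -v i → ∀ x : KPLat (N - 1),
      ((p - q) ^ 2 * (q - r) ^ 2 * (r - p) ^ 2 * τ x * shiftP (shiftQ (shiftS i τ)) x
        + (p + q) ^ 2 * (p + r) ^ 2 * (q - r) ^ 2 * shiftP τ x * shiftQ (shiftS i τ) x
        - (q + r) ^ 2 * (q + p) ^ 2 * (r - p) ^ 2 * shiftQ τ x * shiftP (shiftS i τ) x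
        - (r + p) ^ 2 * (r + q) ^ 2 * (p - q) ^ 2 * shiftS i τ x
            * shiftP (shiftQ τ) x) ^ 2
      - 4 * (p ^ 2 - q ^ 2) ^ 2 * (p ^ 2 - r ^ 2) ^ 2 *
          ((q + r) ^ 2 * shiftP (shiftQ τ) x * shiftP (shiftS i τ) x
            - (q - r) ^ 2 * shiftP τ x * shiftP (shiftQ (shiftS i τ)) x) *
          ((q + r) ^ 2 * shiftQ τ x * shiftS i τ x
            - (q - r) ^ 2 * τ x * shiftQ (shiftS i τ) x) = 0)
    (hsym : ∀ x : KPLat (N - 1), τ (x.1 + 1, x.2.1, fun j => x.2.2 j + 1) = τ x) :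
    σ (N - 1) = shiftPInv τ ∧
    ∀ i : Fin (N - 1), ∀ x : KPLat (N - 1),
      ((p - q) ^ 2 * (q + v i) ^ 2 * (v i + p) ^ 2 * σ (i : ℕ) x
          * shiftP (shiftQ (σ ((i : ℕ) + 1))) x
        + (p + q) ^ 2 * (p - v i) ^ 2 * (q + v i) ^ 2 * shiftP (σ (i : ℕ)) x
          * shiftQ (σ ((i : ℕ) + 1)) x
        - (q - v i) ^ 2 * (q + p) ^ 2 * (v i + p) ^ 2 * shiftQ (σ (i : ℕ)) x
          * shiftP (σ ((i : ℕ) + 1)) x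
        - (v i - p) ^ 2 * (v i - q) ^ 2 * (p - q) ^ 2 * σ ((i : ℕ) + 1) x
          * shiftP (shiftQ (σ (i : ℕ))) x) ^ 2
      - 4 * (p ^ 2 - q ^ 2) ^ 2 * (p ^ 2 - (v i) ^ 2) ^ 2 *
          ((q - v i) ^ 2 * shiftP (shiftQ (σ (i : ℕ))) x * shiftP (σ ((i : ℕ) + 1)) x
            - (q + v i) ^ 2 * shiftP (σ (i : ℕ)) x
              * shiftP (shiftQ (σ ((i : ℕ) + 1))) x) *
          ((q - v i) ^ 2 * shiftQ (σ (i : ℕ)) x * σ ((i : ℕ) + 1) x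
            - (q + v i) ^ 2 * σ (i : ℕ) x * shiftQ (σ ((i : ℕ) + 1)) x) = 0 := by
  have key := sigma_eq τ σ hσ0 hσ
  constructor
  · funext x
    have h2 := hsym (x.1 - 1, x.2.1, x.2.2)
    simp only [show x.1 - 1 + 1 = x.1 from by ring] at h2
    rw [key (N - 1) le_rfl x, shiftPInv, ← h2]
    congr 1
    refine Prod.ext rfl (Prod.ext rfl ?_)
    funext j
    simp [j.isLt]
  · intro i x
    have hlt : (i : ℕ) ≤ N - 1 := le_of_lt i.isLt
    have hi1 : (i : ℕ) + 1 ≤ N - 1 := i.isLt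
    have hfun : ∀ c : Fin (N - 1) → ℤ,
        (fun j : Fin (N - 1) =>
          (c j + if (j : ℕ) < (i : ℕ) then 1 else 0) + if j = i then (1 : ℤ) else 0)
        = (fun j => c j + if (j : ℕ) < (i : ℕ) + 1 then 1 else 0) := by
      intro c
      funext j
      simp only [Fin.ext_iff]
      by_cases h : (j : ℕ) = (i : ℕ)
      · simp [h]
      · by_cases h2 : (j : ℕ) < (i : ℕ)
        · simp [h, h2, Nat.lt_succ_of_lt h2]
        · have : ¬ (j : ℕ) < (i : ℕ) + 1 := by omega
          simp [h, h2, this]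
    have E := hCKP i (-v i) rfl
        (x.1, x.2.1, fun j => x.2.2 j + if (j : ℕ) < (i : ℕ) then 1 else 0)
    simp only [shiftP, shiftQ, shiftS, hfun] at E
    simp only [shiftP, shiftQ, key (i : ℕ) hlt, key ((i : ℕ) + 1) hi1]
    linear_combination E
end
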